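/- arXiv:0907.2621 — 6 statements merged into one kernel-verified Lean document; each statement's English description precedes it below -/
import Mathlib

section
/- For nonzero natural numbers n ≥ 2k and nonzero natural numbers k_1,...,k_p with k_1+···+k_p = k, and any natural numbers n_1,...,n_p with n_1+···+n_p = n, the product of binomial coefficients C(n_1,k_1)·C(n_2,k_2)···C(n_p,k_p) is at most 3·k^(1/2)·(k_1·k_2···k_p)^(-1/2)·C(n,k). -/
open Real Finset Stirling


lemma sqrtpi_le_stirlingSeq (m : ℕ) (hm : 1 ≤ m) : Real.sqrt π ≤ stirlingSeq m := by
  obtain ⟨m, rfl⟩ := Nat.exists_eq_add_of_le hm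
  have h := stirlingSeq'_antitone
  have ht : Filter.Tendsto (fun n => stirlingSeq (n+1)) Filter.atTop (nhds (√π)) :=
    tendsto_stirlingSeq_sqrt_pi.comp (Filter.tendsto_add_atTop_nat 1)
  have := h.le_of_tendsto ht m
  simpa [Nat.add_comm] using this

lemma stirlingSeq_le (m : ℕ) (hm : 1 ≤ m) : stirlingSeq m ≤ exp 1 / Real.sqrt 2 := by
  obtain ⟨m, rfl⟩ := Nat.exists_eq_add_of_le hm
  have h := stirlingSeq'_antitone (Nat.zero_le m)
  simpa [Nat.add_comm, Function.comp, stirlingSeq_one] using h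

lemma robbins_lower (m : ℕ) (hm : 1 ≤ m) :
    Real.sqrt (2*π*m) * ((m:ℝ) / exp 1) ^ m ≤ (Nat.factorial m : ℝ) := by
  have h0 : (0:ℝ) < Real.sqrt (2*m) * ((m:ℝ)/exp 1)^m := by
    have : (0:ℝ) < m := by exact_mod_cast hm
    positivity
  have h := sqrtpi_le_stirlingSeq m hm
  rw [stirlingSeq, le_div_iff₀ h0] at h
  calc Real.sqrt (2*π*m) * ((m:ℝ)/exp 1)^m
      = √π * Real.sqrt (2*m) * ((m:ℝ)/exp 1)^m := by
        rw [← Real.sqrt_mul (by positivity)]; ring_nf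
    _ ≤ (Nat.factorial m : ℝ) := by rw [mul_assoc]; exact h

lemma robbins_upper (m : ℕ) (hm : 1 ≤ m) :
    (Nat.factorial m : ℝ) ≤ exp 1 * Real.sqrt m * ((m:ℝ) / exp 1) ^ m := by
  have h0 : (0:ℝ) < Real.sqrt (2*m) * ((m:ℝ)/exp 1)^m := by
    have : (0:ℝ) < m := by exact_mod_cast hm
    positivity
  have h := stirlingSeq_le m hm
  rw [stirlingSeq, div_le_iff₀ h0] at h
  calc (Nat.factorial m : ℝ) ≤ exp 1 / Real.sqrt 2 * (Real.sqrt (2*m) * ((m:ℝ)/exp 1)^m) := h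
    _ = exp 1 * Real.sqrt m * ((m:ℝ)/exp 1)^m := by
        rw [show (2*m:ℝ) = 2 * m from rfl, Real.sqrt_mul (by norm_num)]
        field_simp


noncomputable def Gent : ℝ → ℝ := fun y => negMulLog y + negMulLog (1 - y) + 2*y^2

lemma concave_Gent : ConcaveOn ℝ (Set.Icc (0:ℝ) 1) Gent := by
  have key : ∀ x : ℝ, x ∈ Set.Ioo (0:ℝ) 1 → (1:ℝ) - x ≠ 0 := by
    rintro x ⟨h0, h1⟩; intro h; nlinarith
  apply concaveOn_of_hasDerivWithinAt2_nonpos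
    (f' := fun y => (-log y - 1) + (log (1-y) + 1) + 4*y)
    (f'' := fun y => -y⁻¹ + (-(1-y)⁻¹) + 4) (convex_Icc 0 1)
  · apply Continuous.continuousOn; unfold Gent; fun_prop
  · intro x hx
    rw [interior_Icc] at hx
    have h0 : x ≠ 0 := ne_of_gt hx.1
    have h1 : (1:ℝ) - x ≠ 0 := key x hx
    have i : HasDerivAt (fun y:ℝ => 1 - y) (-1) x := by
      simpa using (hasDerivAt_id x).const_sub 1
    have d1 : HasDerivAt negMulLog (-log x - 1) x := hasDerivAt_negMulLog h0
    have d2 : HasDerivAt (fun y => negMulLog (1 - y)) (log (1-x) + 1) x := by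
      have := (hasDerivAt_negMulLog h1).comp x i
      exact this.congr_deriv (by ring)
    have d3 : HasDerivAt (fun y:ℝ => 2*y^2) (4*x) x := by
      have := (hasDerivAt_pow 2 x).const_mul (2:ℝ)
      exact this.congr_deriv (by rw [show (2:ℕ) - 1 = 1 from rfl]; ring)
    exact ((d1.add d2).add d3).hasDerivWithinAt
  · intro x hx
    rw [interior_Icc] at hx
    have h0 : x ≠ 0 := ne_of_gt hx.1
    have h1 : (1:ℝ) - x ≠ 0 := key x hx
    have i : HasDerivAt (fun y:ℝ => 1 - y) (-1) x := by
      simpa using (hasDerivAt_id x).const_sub 1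
    have d1 : HasDerivAt (fun y:ℝ => -log y - 1) (-x⁻¹) x := by
      simpa using ((Real.hasDerivAt_log h0).neg).sub_const 1
    have d2 : HasDerivAt (fun y:ℝ => log (1-y) + 1) (-(1-x)⁻¹) x := by
      have := ((Real.hasDerivAt_log h1).comp x i).add_const 1
      exact this.congr_deriv (by ring)
    have d3 : HasDerivAt (fun y:ℝ => 4*y) 4 x := by
      simpa using (hasDerivAt_id x).const_mul (4:ℝ)
    exact ((d1.add d2).add d3).hasDerivWithinAt
  · intro x hx
    rw [interior_Icc] at hx
    obtain ⟨h0, h1⟩ := hx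
    have hy : 0 < 1 - x := by linarith
    have h4 : 4 ≤ x⁻¹ + (1-x)⁻¹ := by
      rw [inv_add_inv (ne_of_gt h0) (ne_of_gt hy), le_div_iff₀ (by positivity)]
      nlinarith [sq_nonneg (2*x-1)]
    linarith


lemma strong_jensen {p : ℕ} (w x : Fin p → ℝ) (hw : ∀ i, 0 < w i)
    (hx : ∀ i, x i ∈ Set.Icc (0:ℝ) 1) (W : ℝ) (hW : ∑ i, w i = W) (hWpos : 0 < W)
    (xbar : ℝ) (hxbar : ∑ i, w i * x i = W * xbar) :
    ∑ i, w i * ((negMulLog (x i) + negMulLog (1 - x i)) + 2*(x i - xbar)^2) ≤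
      W * (negMulLog xbar + negMulLog (1 - xbar)) := by
  have hW0 : W ≠ 0 := ne_of_gt hWpos
  have hmem : ∀ i ∈ Finset.univ (α := Fin p), x i ∈ Set.Icc (0:ℝ) 1 := fun i _ => hx i
  have h₀ : ∀ i ∈ Finset.univ (α := Fin p), 0 ≤ w i / W := fun i _ => by
    have := hw i; positivity
  have h₁ : ∑ i, w i / W = 1 := by
    rw [← Finset.sum_div, hW, div_self hW0]
  have hj := concave_Gent.le_map_sum h₀ h₁ hmem
  have hc : ∑ i, (w i / W) • x i = xbar := by
    have : ∑ i, (w i / W) • x i = (∑ i, w i * x i) / W := by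
      rw [Finset.sum_div]
      exact Finset.sum_congr rfl fun i _ => by rw [smul_eq_mul]; ring
    rw [this, hxbar, mul_comm, mul_div_assoc, div_self hW0, mul_one]
  rw [hc] at hj
  have hj' : ∑ i, w i * Gent (x i) ≤ W * Gent xbar := by
    calc ∑ i, w i * Gent (x i) = ∑ i, W * ((w i / W) • Gent (x i)) :=
          Finset.sum_congr rfl fun i _ => by rw [smul_eq_mul]; field_simp
      _ ≤ W * Gent xbar := by
          rw [← Finset.mul_sum]; exact mul_le_mul_of_nonneg_left hj hWpos.le
  unfold Gent at hj'
  have expand : ∑ i, w i * ((negMulLog (x i) + negMulLog (1 - x i)) + 2*(x i - xbar)^2)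
      = ∑ i, (w i * (negMulLog (x i) + negMulLog (1 - x i) + 2*(x i)^2)
          - 4*xbar*(w i * x i) + 2*xbar^2 * w i) :=
    Finset.sum_congr rfl fun i _ => by ring
  rw [expand, Finset.sum_add_distrib, Finset.sum_sub_distrib, ← Finset.mul_sum,
    ← Finset.mul_sum, hxbar, hW]
  nlinarith [hj']


lemma exp_ent (K D : ℕ) (hK : 1 ≤ K) :
    Real.exp (((K:ℝ)+D) * (negMulLog ((K:ℝ)/((K:ℝ)+D)) + negMulLog (1 - (K:ℝ)/((K:ℝ)+D))))
      = ((K:ℝ)+D)^(K+D) / ((K:ℝ)^K * (D:ℝ)^D) := by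
  have hKpos : (0:ℝ) < K := by exact_mod_cast hK
  have hN : (0:ℝ) < (K:ℝ) + D := by positivity
  have hD0 : (0:ℝ) ≤ D := by positivity
  have h1x : 1 - (K:ℝ)/((K:ℝ)+D) = (D:ℝ)/((K:ℝ)+D) := by field_simp; ring
  have harg : ((K:ℝ)+D) * (negMulLog ((K:ℝ)/((K:ℝ)+D)) + negMulLog (1 - (K:ℝ)/((K:ℝ)+D)))
      = ((K:ℝ)+D) * Real.log ((K:ℝ)+D) - (K:ℝ) * Real.log K - (D:ℝ) * Real.log D := by
    rw [h1x]
    rcases Nat.eq_zero_or_pos D with hD | hD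
    · subst hD
      simp only [Nat.cast_zero, add_zero, zero_div, negMulLog_zero, Real.log_zero, mul_zero,
        sub_zero]
      rw [div_self (ne_of_gt hKpos)]
      simp [negMulLog_one]
    · have hDpos : (0:ℝ) < D := by exact_mod_cast hD
      rw [Real.negMulLog, Real.negMulLog, Real.log_div (ne_of_gt hKpos) (ne_of_gt hN),
        Real.log_div (ne_of_gt hDpos) (ne_of_gt hN)]
      field_simp
      ring
  rw [harg]
  rw [Real.exp_sub, Real.exp_sub]
  rcases Nat.eq_zero_or_pos D with hD | hD
  · subst hD
    simp only [Nat.cast_zero, mul_zero, Real.exp_zero, pow_zero, add_zero, Nat.add_zero, mul_one]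
    rw [zero_mul, Real.exp_zero, div_one, div_self (Real.exp_ne_zero _),
      div_self (ne_of_gt (by positivity : (0:ℝ) < (K:ℝ)^K))]
  · have hDpos : (0:ℝ) < D := by exact_mod_cast hD
    rw [mul_comm ((K:ℝ)+D) _, Real.exp_mul, Real.exp_log hN, mul_comm (K:ℝ) _,
      Real.exp_mul, Real.exp_log hKpos, mul_comm (D:ℝ) _, Real.exp_mul, Real.exp_log hDpos]
    rw [← Real.rpow_natCast ((K:ℝ)+D) (K+D), ← Real.rpow_natCast ((K:ℝ)) K,
      ← Real.rpow_natCast ((D:ℝ)) D]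
    push_cast
    rw [div_div]



lemma two_mul_le_exp {t : ℝ} (ht : 0 ≤ t) : 2*t ≤ Real.exp t := by
  have h := Real.add_one_le_exp (t/2)
  have h2 : Real.exp t = Real.exp (t/2) ^ 2 := by
    rw [sq, ← Real.exp_add]; ring_nf
  nlinarith [sq_nonneg (1 - t/2)]

lemma numeric_pi : (3.141592:ℝ) < π := Real.pi_gt_d6
lemma numeric_e : Real.exp 1 < 2.7182818286 := Real.exp_one_lt_d9

set_option maxHeartbeats 1000000 in
lemma block_bound (K D : ℕ) (hK : 1 ≤ K) (y : ℝ) (hy0 : 0 < y) (hy : y ≤ 1/2) :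
    ((K+D).choose K : ℝ) * Real.sqrt K ≤
      Real.exp (2*((K:ℝ)+D) * ((K:ℝ)/((K:ℝ)+D) - y)^2) *
        (((K:ℝ)+D)^(K+D) / ((K:ℝ)^K * (D:ℝ)^D)) := by
  have hKpos : (0:ℝ) < K := by exact_mod_cast hK
  have hN : (0:ℝ) < (K:ℝ) + D := by positivity
  have hepos := Real.exp_pos (1:ℝ)
  have hpipos := Real.pi_pos
  rcases Nat.eq_zero_or_pos D with hD | hD
  -- Case A : D = 0
  · subst hD
    simp only [Nat.add_zero, Nat.choose_self, Nat.cast_one, one_mul, Nat.cast_zero, add_zero,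
      pow_zero, mul_one]
    rw [div_self (ne_of_gt (by positivity : (0:ℝ) < (K:ℝ)^K)), mul_one,
      div_self (ne_of_gt hKpos)]
    have h1 : (1:ℝ)/2 ≤ 1 - y := by linarith
    have h2 : (K:ℝ)/2 ≤ 2*(K:ℝ)*(1-y)^2 := by
      have h4 : (1/2:ℝ)^2 ≤ (1-y)^2 := by nlinarith
      nlinarith [h4, hKpos]
    have h3 : Real.sqrt K ≤ Real.exp ((K:ℝ)/2) := by
      have hKe : (K:ℝ) ≤ Real.exp ((K:ℝ)/2) ^ 2 := by
        rw [sq, ← Real.exp_add, show (K:ℝ)/2 + (K:ℝ)/2 = (K:ℝ) by ring]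
        have := Real.add_one_le_exp (K:ℝ)
        linarith
      calc Real.sqrt (K:ℝ) ≤ Real.sqrt (Real.exp ((K:ℝ)/2)^2) := Real.sqrt_le_sqrt hKe
        _ = Real.exp ((K:ℝ)/2) := Real.sqrt_sq (le_of_lt (Real.exp_pos _))
    exact h3.trans (Real.exp_le_exp.2 h2)
  -- Cases B, C : D ≥ 1
  · have hDpos : (0:ℝ) < D := by exact_mod_cast hD
    set N := K + D with hNdef
    have hN1 : 1 ≤ N := le_trans hK (Nat.le_add_right K D)
    have hNr : (N:ℝ) = (K:ℝ) + D := by push_cast [hNdef]; ring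
    have hEpos : (0:ℝ) < ((K:ℝ)+D)^(K+D) / ((K:ℝ)^K * (D:ℝ)^D) := by positivity
    -- cast choose to factorials
    have hcast : ((N).choose K : ℝ) = (Nat.factorial N : ℝ) /
        ((Nat.factorial K : ℝ) * (Nat.factorial D : ℝ)) := by
      rw [Nat.cast_choose ℝ (Nat.le_add_right K D)]
      simp only [show K + D - K = D from by omega]
      rfl
    have hdenpos : (0:ℝ) < Real.sqrt (2*π*K) * ((K:ℝ)/exp 1)^K *
        (Real.sqrt (2*π*D) * ((D:ℝ)/exp 1)^D) := by positivity
    have hratio : ((N).choose K : ℝ) ≤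
        (exp 1 * Real.sqrt N * ((N:ℝ)/exp 1)^N) /
          (Real.sqrt (2*π*K) * ((K:ℝ)/exp 1)^K * (Real.sqrt (2*π*D) * ((D:ℝ)/exp 1)^D)) := by
      rw [hcast]
      apply div_le_div₀ (by positivity) (robbins_upper N hN1) hdenpos
      exact mul_le_mul (robbins_lower K hK) (robbins_lower D hD) (by positivity) (by positivity)
    -- rewrite the Robbins ratio
    have hkey : (exp 1 * Real.sqrt N * ((N:ℝ)/exp 1)^N) /
          (Real.sqrt (2*π*K) * ((K:ℝ)/exp 1)^K * (Real.sqrt (2*π*D) * ((D:ℝ)/exp 1)^D))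
        = (exp 1 / (2*π)) * (Real.sqrt N / (Real.sqrt K * Real.sqrt D)) *
          (((K:ℝ)+D)^(K+D) / ((K:ℝ)^K * (D:ℝ)^D)) := by
      rw [Real.sqrt_mul (by positivity) (K:ℝ), Real.sqrt_mul (by positivity) (D:ℝ),
        div_pow, div_pow, div_pow]
      rw [show ((exp 1)^N) = (exp 1)^K * (exp 1)^D by rw [← pow_add]]
      rw [← hNr]
      have h2π : Real.sqrt (2*π) * Real.sqrt (2*π) = 2*π := Real.mul_self_sqrt (by positivity)
      field_simp
      ring_nf
      rw [Real.sq_sqrt (by positivity), hNdef]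
      ring
    -- combine
    set E := ((K:ℝ)+D)^(K+D) / ((K:ℝ)^K * (D:ℝ)^D) with hEdef
    have hsqrtK : (0:ℝ) < Real.sqrt K := Real.sqrt_pos.2 hKpos
    have hsqrtD : (0:ℝ) < Real.sqrt D := Real.sqrt_pos.2 hDpos
    have hub : ((N).choose K : ℝ) * Real.sqrt K ≤
        (exp 1 / (2*π)) * (Real.sqrt N / Real.sqrt D) * E := by
      have := mul_le_mul_of_nonneg_right (hkey ▸ hratio) (le_of_lt hsqrtK)
      calc ((N).choose K : ℝ) * Real.sqrt K
          ≤ (exp 1 / (2*π)) * (Real.sqrt N / (Real.sqrt K * Real.sqrt D)) * E * Real.sqrt K :=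
            this
        _ = (exp 1 / (2*π)) * (Real.sqrt N / Real.sqrt D) * E := by
            field_simp
    have hgap0 : (0:ℝ) ≤ 2*((K:ℝ)+D) * ((K:ℝ)/((K:ℝ)+D) - y)^2 := by positivity
    rcases le_or_gt K (4*D) with hKD | hKD
    -- Case B : K ≤ 4D
    · have hN5D : (N:ℝ) ≤ 5*D := by
        have : (K:ℝ) ≤ 4*D := by exact_mod_cast hKD
        rw [hNr]; linarith
      have h5 : Real.sqrt 5 ≤ 2.2360680 := by
        have h := Real.sqrt_le_sqrt (show (5:ℝ) ≤ 2.2360680^2 by norm_num)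
        rwa [Real.sqrt_sq (by norm_num)] at h
      have hside : Real.sqrt N ≤ Real.sqrt 5 * Real.sqrt D := by
        rw [← Real.sqrt_mul (by norm_num)]
        exact Real.sqrt_le_sqrt hN5D
      have he5 : exp 1 * Real.sqrt 5 ≤ 2*π := by
        have he := numeric_e
        have hp := numeric_pi
        nlinarith [Real.sqrt_nonneg (5:ℝ), h5, hepos]
      have hfac : (exp 1 / (2*π)) * (Real.sqrt N / Real.sqrt D) ≤ 1 := by
        rw [div_mul_div_comm, div_le_one (by positivity)]
        calc exp 1 * Real.sqrt N ≤ exp 1 * (Real.sqrt 5 * Real.sqrt D) :=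
              mul_le_mul_of_nonneg_left hside (le_of_lt hepos)
          _ = (exp 1 * Real.sqrt 5) * Real.sqrt D := by ring
          _ ≤ 2*π * Real.sqrt D := mul_le_mul_of_nonneg_right he5 (le_of_lt hsqrtD)
      calc ((N).choose K : ℝ) * Real.sqrt K
          ≤ (exp 1 / (2*π)) * (Real.sqrt N / Real.sqrt D) * E := hub
        _ ≤ 1 * E := mul_le_mul_of_nonneg_right hfac (le_of_lt hEpos)
        _ ≤ Real.exp (2*((K:ℝ)+D) * ((K:ℝ)/((K:ℝ)+D) - y)^2) * E :=
            mul_le_mul_of_nonneg_right (Real.one_le_exp hgap0) (le_of_lt hEpos)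
    -- Case C : K ≥ 4D + 1
    · have hx45 : (4:ℝ)/5 ≤ (K:ℝ)/((K:ℝ)+D) := by
        rw [div_le_div_iff₀ (by norm_num) hN]
        have : (4*D:ℝ) ≤ K := by
          have : (4*D:ℕ) ≤ K := by omega
          exact_mod_cast this
        linarith
      have hxy : (3:ℝ)/10 ≤ (K:ℝ)/((K:ℝ)+D) - y := by linarith
      have hgap : (9:ℝ)*N/50 ≤ 2*((K:ℝ)+D) * ((K:ℝ)/((K:ℝ)+D) - y)^2 := by
        rw [hNr]
        nlinarith [hN, hxy, sq_nonneg ((K:ℝ)/((K:ℝ)+D) - y - 3/10)]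
      have hD1 : (1:ℝ) ≤ Real.sqrt D := by
        rw [show (1:ℝ) = Real.sqrt 1 from (Real.sqrt_one).symm]
        exact Real.sqrt_le_sqrt (by exact_mod_cast hD)
      have hstep : (exp 1 / (2*π)) * Real.sqrt N ≤ Real.exp (9*N/50) := by
        have hexp2 : Real.exp (9*(N:ℝ)/50)^2 = Real.exp (9*(N:ℝ)/25) := by
          rw [sq, ← Real.exp_add]; ring_nf
        have h2t := two_mul_le_exp (show (0:ℝ) ≤ 9*(N:ℝ)/25 by positivity)
        have hA : (N:ℝ) ≤ (Real.exp (9*(N:ℝ)/50) * (2*π/exp 1))^2 := by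
          rw [mul_pow, hexp2]
          have hπe : (36:ℝ)/25 ≤ (2*π/exp 1)^2 := by
            rw [div_pow, le_div_iff₀ (by positivity)]
            nlinarith [numeric_pi, numeric_e, hepos]
          calc (N:ℝ) = (25/18) * (2*(9*(N:ℝ)/25)) := by ring
            _ ≤ (25/18) * Real.exp (9*(N:ℝ)/25) := by linarith [h2t]
            _ ≤ Real.exp (9*(N:ℝ)/25) * (2*π/exp 1)^2 := by
                nlinarith [Real.exp_pos (9*(N:ℝ)/25), hπe]
        have hsq : Real.sqrt N ≤ Real.exp (9*(N:ℝ)/50) * (2*π/exp 1) := by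
          calc Real.sqrt (N:ℝ) ≤ Real.sqrt ((Real.exp (9*(N:ℝ)/50) * (2*π/exp 1))^2) :=
                Real.sqrt_le_sqrt hA
            _ = Real.exp (9*(N:ℝ)/50) * (2*π/exp 1) := Real.sqrt_sq (by positivity)
        calc (exp 1 / (2*π)) * Real.sqrt N
            ≤ (exp 1 / (2*π)) * (Real.exp (9*(N:ℝ)/50) * (2*π/exp 1)) :=
              mul_le_mul_of_nonneg_left hsq (by positivity)
          _ = Real.exp (9*(N:ℝ)/50) := by field_simp
      have hfac : (exp 1 / (2*π)) * (Real.sqrt N / Real.sqrt D) ≤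
          Real.exp (2*((K:ℝ)+D) * ((K:ℝ)/((K:ℝ)+D) - y)^2) := by
        have h1 : Real.sqrt (N:ℝ) / Real.sqrt D ≤ Real.sqrt N := by
          rw [div_le_iff₀ hsqrtD]
          nlinarith [Real.sqrt_nonneg (N:ℝ), hD1]
        calc (exp 1 / (2*π)) * (Real.sqrt N / Real.sqrt D)
            ≤ (exp 1 / (2*π)) * Real.sqrt N :=
              mul_le_mul_of_nonneg_left h1 (by positivity)
          _ ≤ Real.exp (9*N/50) := hstep
          _ ≤ Real.exp (2*((K:ℝ)+D) * ((K:ℝ)/((K:ℝ)+D) - y)^2) := Real.exp_le_exp.2 hgap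
      calc ((N).choose K : ℝ) * Real.sqrt K
          ≤ (exp 1 / (2*π)) * (Real.sqrt N / Real.sqrt D) * E := hub
        _ ≤ Real.exp (2*((K:ℝ)+D) * ((K:ℝ)/((K:ℝ)+D) - y)^2) * E :=
            mul_le_mul_of_nonneg_right hfac (le_of_lt hEpos)



set_option maxHeartbeats 1000000 in
lemma global_bound (k d : ℕ) (hk : 1 ≤ k) (hkd : k ≤ d) :
    ((k:ℝ)+d)^(k+d) / ((k:ℝ)^k * (d:ℝ)^d) ≤ 3 * Real.sqrt k * (((k+d).choose k : ℝ)) := by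
  have hd1 : 1 ≤ d := le_trans hk hkd
  have hkpos : (0:ℝ) < k := by exact_mod_cast hk
  have hdpos : (0:ℝ) < d := by exact_mod_cast hd1
  have hN : (0:ℝ) < (k:ℝ) + d := by positivity
  have hepos := Real.exp_pos (1:ℝ)
  have hpipos := Real.pi_pos
  set n := k + d with hndef
  have hn1 : 1 ≤ n := le_trans hk (Nat.le_add_right k d)
  have hnr : (n:ℝ) = (k:ℝ) + d := by push_cast [hndef]; ring
  have hcast : ((n).choose k : ℝ) = (Nat.factorial n : ℝ) /
      ((Nat.factorial k : ℝ) * (Nat.factorial d : ℝ)) := by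
    rw [Nat.cast_choose ℝ (Nat.le_add_right k d)]
    simp only [show k + d - k = d from by omega]
    rfl
  have hdenpos : (0:ℝ) < exp 1 * Real.sqrt k * ((k:ℝ)/exp 1)^k *
      (exp 1 * Real.sqrt d * ((d:ℝ)/exp 1)^d) := by positivity
  have hratio : (Real.sqrt (2*π*n) * ((n:ℝ)/exp 1)^n) /
        (exp 1 * Real.sqrt k * ((k:ℝ)/exp 1)^k * (exp 1 * Real.sqrt d * ((d:ℝ)/exp 1)^d))
      ≤ ((n).choose k : ℝ) := by
    rw [hcast]
    apply div_le_div₀ (by positivity) (robbins_lower n hn1)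
      (mul_pos (by exact_mod_cast k.factorial_pos) (by exact_mod_cast d.factorial_pos))
    exact mul_le_mul (robbins_upper k hk) (robbins_upper d hd1)
      (by positivity) (by positivity)
  have hkey : (Real.sqrt (2*π*n) * ((n:ℝ)/exp 1)^n) /
        (exp 1 * Real.sqrt k * ((k:ℝ)/exp 1)^k * (exp 1 * Real.sqrt d * ((d:ℝ)/exp 1)^d))
      = (Real.sqrt (2*π) / (exp 1 * exp 1)) * (Real.sqrt n / (Real.sqrt k * Real.sqrt d)) *
        (((k:ℝ)+d)^(k+d) / ((k:ℝ)^k * (d:ℝ)^d)) := by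
    rw [Real.sqrt_mul (by positivity) (n:ℝ), div_pow, div_pow, div_pow]
    rw [show ((exp 1)^n) = (exp 1)^k * (exp 1)^d by rw [← pow_add]]
    rw [← hnr]
    field_simp
    ring
  set E := ((k:ℝ)+d)^(k+d) / ((k:ℝ)^k * (d:ℝ)^d) with hEdef
  have hEpos : (0:ℝ) < E := by positivity
  have hsqrtk : (0:ℝ) < Real.sqrt k := Real.sqrt_pos.2 hkpos
  have hsqrtd : (0:ℝ) < Real.sqrt d := Real.sqrt_pos.2 hdpos
  have hsqrtn : (0:ℝ) < Real.sqrt n := Real.sqrt_pos.2 (by rw [hnr]; positivity)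
  -- numeric : exp 1 * exp 1 ≤ 3 * sqrt (2π)
  have h2π : (2.5066:ℝ) ≤ Real.sqrt (2*π) := by
    have h := Real.sqrt_le_sqrt (show (2.5066:ℝ)^2 ≤ 2*π by nlinarith [numeric_pi])
    rwa [Real.sqrt_sq (by norm_num)] at h
  have hnum : exp 1 * exp 1 ≤ 3 * Real.sqrt (2*π) := by
    nlinarith [numeric_e, hepos, h2π]
  -- sqrt d ≤ sqrt n
  have hdn : Real.sqrt d ≤ Real.sqrt n := Real.sqrt_le_sqrt (by rw [hnr]; linarith)
  -- conclude
  have hfac : (1:ℝ) ≤ 3 * Real.sqrt k * ((Real.sqrt (2*π) / (exp 1 * exp 1)) *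
      (Real.sqrt n / (Real.sqrt k * Real.sqrt d))) := by
    rw [show 3 * Real.sqrt k * ((Real.sqrt (2*π) / (exp 1 * exp 1)) *
        (Real.sqrt n / (Real.sqrt k * Real.sqrt d)))
      = (3 * Real.sqrt (2*π) * Real.sqrt n) / (exp 1 * exp 1 * Real.sqrt d) by
        field_simp]
    rw [le_div_iff₀ (by positivity)]
    calc 1 * (exp 1 * exp 1 * Real.sqrt d) = (exp 1 * exp 1) * Real.sqrt d := by ring
      _ ≤ (3 * Real.sqrt (2*π)) * Real.sqrt n :=
          mul_le_mul hnum hdn (le_of_lt hsqrtd) (by positivity)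
      _ = 3 * Real.sqrt (2*π) * Real.sqrt n := by ring
  calc E = 1 * E := (one_mul E).symm
    _ ≤ (3 * Real.sqrt k * ((Real.sqrt (2*π) / (exp 1 * exp 1)) *
        (Real.sqrt n / (Real.sqrt k * Real.sqrt d)))) * E :=
        mul_le_mul_of_nonneg_right hfac (le_of_lt hEpos)
    _ = 3 * Real.sqrt k * ((Real.sqrt (2*π) / (exp 1 * exp 1)) *
        (Real.sqrt n / (Real.sqrt k * Real.sqrt d)) * E) := by ring
    _ ≤ 3 * Real.sqrt k * (((n).choose k : ℝ)) := by
        apply mul_le_mul_of_nonneg_left _ (by positivity)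
        rw [← hkey]
        exact hratio




set_option maxHeartbeats 2000000 in
/-- For nonzero naturals `n ≥ 2k`, nonzero `k₁,…,k_p` summing to `k`, and
naturals `n₁,…,n_p` summing to `n`, we have
`C(n₁,k₁)⋯C(n_p,k_p) ≤ 3 · k^(1/2) · (k₁⋯k_p)^(-1/2) · C(n,k)`. -/
theorem stmt0 (p n k : ℕ) (hn : n ≠ 0) (hk : k ≠ 0) (hnk : 2 * k ≤ n)
    (ks ns : Fin p → ℕ) (hks : ∀ i, ks i ≠ 0)
    (hsumk : ∑ i, ks i = k) (hsumn : ∑ i, ns i = n) :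
    (∏ i, ((ns i).choose (ks i) : ℝ)) ≤
      3 * (k : ℝ) ^ ((1 : ℝ) / 2) * ((∏ i, (ks i : ℝ)) ^ (-(1 : ℝ) / 2)) *
        (n.choose k : ℝ) := by
  have hkpos : 0 < k := Nat.pos_of_ne_zero hk
  have hrk : (0:ℝ) < k := by exact_mod_cast hkpos
  have hkipos : ∀ i, 0 < ks i := fun i => Nat.pos_of_ne_zero (hks i)
  have hprodpos : (0:ℝ) < ∏ i, (ks i : ℝ) :=
    Finset.prod_pos (fun i _ => by exact_mod_cast hkipos i)
  by_cases hle : ∀ i, ks i ≤ ns i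
  swap
  · push_neg at hle
    obtain ⟨i, hi⟩ := hle
    have hz : ((ns i).choose (ks i) : ℝ) = 0 := by
      rw [Nat.choose_eq_zero_of_lt hi]; norm_num
    rw [Finset.prod_eq_zero (Finset.mem_univ i) hz]
    positivity
  -- main case
  set ds : Fin p → ℕ := fun i => ns i - ks i with hdsdef
  have hnsi : ∀ i, ns i = ks i + ds i := fun i => by
    have := hle i; simp only [hdsdef]; omega
  set d : ℕ := n - k with hddef
  have hnd : n = k + d := by omega
  have hkd : k ≤ d := by omega
  have hrn : (0:ℝ) < n := by
    exact_mod_cast Nat.pos_of_ne_zero hn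
  set y : ℝ := (k:ℝ)/(n:ℝ) with hydef
  have hy0 : 0 < y := by rw [hydef]; positivity
  have hy2 : y ≤ 1/2 := by
    rw [hydef, div_le_iff₀ hrn]
    have : ((2*k:ℕ):ℝ) ≤ (n:ℝ) := by exact_mod_cast hnk
    push_cast at this
    linarith
  -- abbreviations
  set w : Fin p → ℝ := fun i => (ks i : ℝ) + (ds i : ℝ) with hwdef
  set x : Fin p → ℝ := fun i => (ks i : ℝ) / ((ks i : ℝ) + (ds i : ℝ)) with hxdef
  have hwpos : ∀ i, 0 < w i := fun i => by
    have : (0:ℝ) < (ks i : ℝ) := by exact_mod_cast hkipos i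
    have : (0:ℝ) ≤ (ds i : ℝ) := by positivity
    simp only [hwdef]
    linarith
  -- per block bound
  have hblock : ∀ i, ((ns i).choose (ks i) : ℝ) * Real.sqrt (ks i) ≤
      Real.exp (2 * w i * (x i - y)^2) *
        (((ks i:ℝ)+(ds i:ℝ))^(ns i) / ((ks i:ℝ)^(ks i) * (ds i:ℝ)^(ds i))) := by
    intro i
    have h := block_bound (ks i) (ds i) (hkipos i) y hy0 hy2
    rw [← hnsi i] at h
    exact h
  -- product of per block bounds
  have hstep2 : ∏ i, (((ns i).choose (ks i) : ℝ) * Real.sqrt (ks i)) ≤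
      ∏ i, (Real.exp (2 * w i * (x i - y)^2) *
        (((ks i:ℝ)+(ds i:ℝ))^(ns i) / ((ks i:ℝ)^(ks i) * (ds i:ℝ)^(ds i)))) :=
    Finset.prod_le_prod (fun i _ => by positivity) (fun i _ => hblock i)
  -- identify RHS with exp of sum
  have hstep3 : ∏ i, (Real.exp (2 * w i * (x i - y)^2) *
        (((ks i:ℝ)+(ds i:ℝ))^(ns i) / ((ks i:ℝ)^(ks i) * (ds i:ℝ)^(ds i))))
      = Real.exp (∑ i, (w i * ((negMulLog (x i) + negMulLog (1 - x i)) + 2*(x i - y)^2))) := by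
    rw [Real.exp_sum]
    apply Finset.prod_congr rfl
    intro i _
    have hee := exp_ent (ks i) (ds i) (hkipos i)
    rw [← hnsi i] at hee
    rw [← hee, ← Real.exp_add]
    congr 1
    simp only [hwdef, hxdef]
    ring
  -- Jensen
  have hsumw : ∑ i, w i = (n:ℝ) := by
    simp only [hwdef]
    rw [← hsumn]
    push_cast [hnsi]
    exact Finset.sum_congr rfl fun i _ => rfl
  have hsumwx : ∑ i, w i * x i = (n:ℝ) * y := by
    have : ∀ i, w i * x i = (ks i : ℝ) := by
      intro i
      have := hwpos i
      simp only [hwdef, hxdef] at this ⊢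
      field_simp
    rw [Finset.sum_congr rfl (fun i _ => this i)]
    have hcast : ∑ i, ((ks i : ℕ):ℝ) = (k:ℝ) := by exact_mod_cast hsumk
    rw [hcast, hydef]
    field_simp
  have hxmem : ∀ i, x i ∈ Set.Icc (0:ℝ) 1 := by
    intro i
    have hwi := hwpos i
    have hki : (0:ℝ) < (ks i : ℝ) := by exact_mod_cast hkipos i
    have hdi : (0:ℝ) ≤ (ds i : ℝ) := by positivity
    constructor
    · simp only [hxdef]; positivity
    · simp only [hxdef]
      rw [div_le_one (by simp only [hwdef] at hwi; exact hwi)]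
      linarith
  have hjen := strong_jensen w x hwpos hxmem (n:ℝ) hsumw hrn y hsumwx
  -- global entropy identification
  have hglob : Real.exp ((n:ℝ) * (negMulLog y + negMulLog (1 - y)))
      ≤ 3 * Real.sqrt k * (n.choose k : ℝ) := by
    have hee := exp_ent k d hkpos
    have hnr : ((k:ℝ) + (d:ℝ)) = (n:ℝ) := by rw [hnd]; push_cast; ring
    rw [hnr, ← hydef] at hee
    rw [hee]
    have hgb := global_bound k d hkpos hkd
    have hch : (k+d).choose k = n.choose k := by rw [← hnd]
    rw [hnr, hch] at hgb
    exact hgb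
  -- combine
  have hmain : (∏ i, ((ns i).choose (ks i) : ℝ)) * (∏ i, Real.sqrt (ks i)) ≤
      3 * Real.sqrt k * (n.choose k : ℝ) := by
    rw [← Finset.prod_mul_distrib]
    calc ∏ i, (((ns i).choose (ks i) : ℝ) * Real.sqrt (ks i))
        ≤ Real.exp (∑ i, (w i * ((negMulLog (x i) + negMulLog (1 - x i)) + 2*(x i - y)^2))) := by
          rw [← hstep3]; exact hstep2
      _ ≤ Real.exp ((n:ℝ) * (negMulLog y + negMulLog (1 - y))) := Real.exp_le_exp.2 hjen
      _ ≤ 3 * Real.sqrt k * (n.choose k : ℝ) := hglob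
  -- translate to rpow form
  have hsp : ∏ i, Real.sqrt (ks i : ℝ) = (∏ i, (ks i:ℝ)) ^ ((1:ℝ)/2) := by
    rw [← Real.finset_prod_rpow Finset.univ (fun i => ((ks i:ℕ):ℝ))
      (fun i _ => by positivity) ((1:ℝ)/2)]
    exact Finset.prod_congr rfl fun i _ => Real.sqrt_eq_rpow _
  have hsppos : (0:ℝ) < ∏ i, Real.sqrt (ks i : ℝ) :=
    Finset.prod_pos fun i _ => Real.sqrt_pos.2 (by exact_mod_cast hkipos i)
  rw [(by norm_num : (-(1:ℝ))/2 = -((1:ℝ)/2)), Real.rpow_neg (le_of_lt hprodpos), ← hsp]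
  calc (∏ i, ((ns i).choose (ks i) : ℝ))
      = ((∏ i, ((ns i).choose (ks i) : ℝ)) * (∏ i, Real.sqrt (ks i))) *
        (∏ i, Real.sqrt (ks i : ℝ))⁻¹ := by
        field_simp
    _ ≤ (3 * Real.sqrt k * (n.choose k : ℝ)) * (∏ i, Real.sqrt (ks i : ℝ))⁻¹ :=
        mul_le_mul_of_nonneg_right hmain (by positivity)
    _ = 3 * (k:ℝ) ^ ((1:ℝ)/2) * (∏ i, Real.sqrt (ks i : ℝ))⁻¹ * (n.choose k : ℝ) := by
        rw [← Real.sqrt_eq_rpow]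
        ring
end

section
/- For nonzero natural numbers N, K with 3K ≤ 2N (i.e., 1.5K ≤ N), we have (1/3)·K^(-1/2)·N^N/(K^K·(N-K)^(N-K)) ≤ C(N,K) ≤ K^(-1/2)·N^N/(K^K·(N-K)^(N-K)). -/
open Real Nat


lemma stirling_lb' (n : ℕ) (hn : n ≠ 0) :
    √π * (√(2 * n) * ((n : ℝ) / Real.exp 1) ^ n) ≤ (n ! : ℝ) := by
  obtain ⟨j, rfl⟩ := Nat.exists_eq_succ_of_ne_zero hn
  have h1 : √π ≤ Stirling.stirlingSeq (j + 1) :=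
    Stirling.stirlingSeq'_antitone.le_of_tendsto
      (Stirling.tendsto_stirlingSeq_sqrt_pi.comp (Filter.tendsto_add_atTop_nat 1)) j
  have hd : (0:ℝ) < √(2 * (j+1 : ℕ)) * (((j+1 : ℕ) : ℝ) / Real.exp 1) ^ (j+1) := by positivity
  rw [Stirling.stirlingSeq, le_div_iff₀ hd] at h1
  exact h1

lemma stirling_ub' (n : ℕ) (hn : n ≠ 0) :
    (n ! : ℝ) ≤ (Real.exp 1 / √2) * (√(2 * n) * ((n : ℝ) / Real.exp 1) ^ n) := by
  obtain ⟨j, rfl⟩ := Nat.exists_eq_succ_of_ne_zero hn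
  have h1 : Stirling.stirlingSeq (j + 1) ≤ Stirling.stirlingSeq 1 :=
    Stirling.stirlingSeq'_antitone (Nat.zero_le j)
  rw [Stirling.stirlingSeq_one] at h1
  have hd : (0:ℝ) < √(2 * (j+1 : ℕ)) * (((j+1 : ℕ) : ℝ) / Real.exp 1) ^ (j+1) := by positivity
  rw [Stirling.stirlingSeq, div_le_iff₀ hd] at h1
  exact h1

lemma sc_up' (n mm : ℝ) (hn : 0 < n) (hm : 0 < mm) (h3 : n ≤ 3*mm) :
    Real.exp 1 * √n ≤ 2*(π*√mm) := by
  have h1 : Real.exp 1 * √n = √(Real.exp 1^2 * n) := by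
    rw [Real.sqrt_mul (by positivity), Real.sqrt_sq (Real.exp_pos 1).le]
  have h2 : 2*(π*√mm) = √((2*π)^2 * mm) := by
    rw [Real.sqrt_mul (by positivity), Real.sqrt_sq (by positivity)]; ring
  rw [h1, h2]
  apply Real.sqrt_le_sqrt
  have he2 : Real.exp 1^2 < 2.7182818286^2 :=
    pow_lt_pow_left₀ Real.exp_one_lt_d9 (Real.exp_pos 1).le two_ne_zero
  have hpi2 : (3.141592:ℝ)^2 < π^2 :=
    pow_lt_pow_left₀ Real.pi_gt_d6 (by norm_num) two_ne_zero
  have key : Real.exp 1^2 * n ≤ Real.exp 1^2 * (3*mm) :=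
    mul_le_mul_of_nonneg_left h3 (sq_nonneg _)
  nlinarith [key, mul_lt_mul_of_pos_right he2 hm, mul_lt_mul_of_pos_right hpi2 hm]

lemma sc_lo' (n mm : ℝ) (hn : 0 < n) (hm : 0 < mm) (h3 : mm ≤ n) :
    Real.exp 1^2 * √mm / 3 ≤ √π*(√2*√n) := by
  have main : Real.exp 1^2 * √mm ≤ 3*(√π*(√2*√n)) := by
    have h1 : Real.exp 1^2 * √mm = √((Real.exp 1^2)^2 * mm) := by
      rw [Real.sqrt_mul (by positivity), Real.sqrt_sq (by positivity)]
    have h2 : 3*(√π*(√2*√n)) = √(9*(π*(2*n))) := by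
      rw [show (9:ℝ)*(π*(2*n)) = (3:ℝ)^2*(π*(2*n)) by ring,
        Real.sqrt_mul (by positivity), Real.sqrt_sq (by positivity),
        Real.sqrt_mul Real.pi_pos.le, Real.sqrt_mul (by positivity)]
    rw [h1, h2]
    apply Real.sqrt_le_sqrt
    have he2 : Real.exp 1^2 < 2.7182818286^2 :=
      pow_lt_pow_left₀ Real.exp_one_lt_d9 (Real.exp_pos 1).le two_ne_zero
    have he4 : (Real.exp 1^2)^2 < (2.7182818286^2)^2 :=
      pow_lt_pow_left₀ he2 (sq_nonneg _) two_ne_zero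
    have key : (Real.exp 1^2)^2 * mm ≤ (Real.exp 1^2)^2 * n :=
      mul_le_mul_of_nonneg_left h3 (sq_nonneg _)
    nlinarith [key, mul_lt_mul_of_pos_right he4 hn,
      mul_lt_mul_of_pos_right Real.pi_gt_d6 hn]
  linarith

/-- Stirling-type bounds: for nonzero `N, K` with `3K ≤ 2N`,
`(1/3)·K^(-1/2)·N^N/(K^K·(N-K)^(N-K)) ≤ C(N,K) ≤ K^(-1/2)·N^N/(K^K·(N-K)^(N-K))`. -/
theorem stmt1 (N K : ℕ) (hN : N ≠ 0) (hK : K ≠ 0) (h : 3 * K ≤ 2 * N) :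
    (1 / 3 : ℝ) * (K : ℝ) ^ (-(1 : ℝ) / 2) *
        ((N : ℝ) ^ N / ((K : ℝ) ^ K * ((N : ℝ) - (K : ℝ)) ^ (N - K))) ≤
      (N.choose K : ℝ) ∧
    (N.choose K : ℝ) ≤
      (K : ℝ) ^ (-(1 : ℝ) / 2) *
        ((N : ℝ) ^ N / ((K : ℝ) ^ K * ((N : ℝ) - (K : ℝ)) ^ (N - K))) := by
  have hKN : K ≤ N := by omega
  set m := N - K with hmdef
  have hm0 : m ≠ 0 := by omega
  have hKm : K + m = N := by omega
  have hcast : ((N : ℝ) - (K : ℝ)) = (m : ℝ) := by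
    rw [hmdef, Nat.cast_sub hKN]
  have hKpos : (0:ℝ) < K := by positivity
  have hmpos : (0:ℝ) < m := by exact_mod_cast Nat.pos_of_ne_zero hm0
  have hNpos : (0:ℝ) < N := by positivity
  have hm3 : (N:ℝ) ≤ 3 * m := by
    have : N ≤ 3 * m := by omega
    exact_mod_cast this
  have hNm : (m:ℝ) ≤ N := by exact_mod_cast Nat.sub_le N K
  set e := Real.exp 1 with he
  have hepos : 0 < e := Real.exp_pos 1
  have hee : e ^ K * e ^ m = e ^ N := by rw [← pow_add, hKm]
  have hC : (N.choose K : ℝ) = (N ! : ℝ) / ((K ! : ℝ) * (m ! : ℝ)) := by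
    rw [Nat.cast_choose ℝ hKN]
  set pn := √(2 * N) * ((N : ℝ) / e) ^ N with hpn
  set pk := √(2 * K) * ((K : ℝ) / e) ^ K with hpk
  set pm := √(2 * m) * ((m : ℝ) / e) ^ m with hpm
  have hpnpos : 0 < pn := by rw [hpn]; positivity
  have hpkpos : 0 < pk := by rw [hpk]; positivity
  have hpmpos : 0 < pm := by rw [hpm]; positivity
  have hπ : (0:ℝ) < √π := by positivity
  have hsKne : √(K:ℝ) ≠ 0 := by positivity
  have h2' : (√2:ℝ) * √2 = 2 := Real.mul_self_sqrt (by norm_num)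
  have hKKne : ((K:ℝ))^K ≠ 0 := by positivity
  have hmmne : ((m:ℝ))^m ≠ 0 := by positivity
  have heNne : e^N ≠ 0 := by positivity
  have hrK : (K : ℝ) ^ (-(1 : ℝ) / 2) = (√(K:ℝ))⁻¹ := by
    rw [neg_div, Real.rpow_neg hKpos.le, Real.sqrt_eq_rpow]
  have hfacpos : (0:ℝ) < (K ! : ℝ) * (m ! : ℝ) := by
    have := Nat.mul_pos K.factorial_pos m.factorial_pos
    exact_mod_cast this
  have hsplitN : √(2*(N:ℝ)) = √2 * √(N:ℝ) := Real.sqrt_mul (by norm_num) _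
  have hsplitK : √(2*(K:ℝ)) = √2 * √(K:ℝ) := Real.sqrt_mul (by norm_num) _
  have hsplitm : √(2*(m:ℝ)) = √2 * √(m:ℝ) := Real.sqrt_mul (by norm_num) _
  have hpnfac : pn = √(2*(N:ℝ)) * ((N:ℝ)^N / e^N) := by rw [hpn, div_pow]
  -- lemma A : lower bound of denominator
  have hA : (√π * pk) * (√π * pm)
      = π * (√(2*(K:ℝ)) * √(2*(m:ℝ))) * ((K:ℝ)^K * (m:ℝ)^m) / e^N := by
    have hππ : √π * √π = π := Real.mul_self_sqrt Real.pi_pos.le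
    rw [hpk, hpm, div_pow, div_pow, ← hee]
    field_simp
    linear_combination hππ
  -- lemma B : upper bound of denominator
  have hB : ((e/√2) * pk) * ((e/√2) * pm)
      = (e^2/2) * (√(2*(K:ℝ)) * √(2*(m:ℝ))) * ((K:ℝ)^K * (m:ℝ)^m) / e^N := by
    rw [hpk, hpm, div_pow, div_pow, ← hee]
    field_simp
    linear_combination (-1) * h2'
  rw [hcast, hrK]
  constructor
  · -- lower bound
    have hlo : (√π * pn) / (((e/√2) * pk) * ((e/√2) * pm)) ≤ (N.choose K : ℝ) := by
      rw [hC]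
      apply div_le_div₀ (by positivity) (stirling_lb' N hN) (by positivity)
      exact mul_le_mul (stirling_ub' K hK) (stirling_ub' m hm0) (by positivity) (by positivity)
    refine le_trans ?_ hlo
    rw [hB, le_div_iff₀ (by rw [← hB]; positivity)]
    have hscal : (1/3 : ℝ) * (√(K:ℝ))⁻¹ * ((e^2/2) * (√(2*(K:ℝ)) * √(2*(m:ℝ))))
        ≤ √π * √(2*(N:ℝ)) := by
      rw [hsplitK, hsplitm, hsplitN]
      have hL : (1/3 : ℝ) * (√(K:ℝ))⁻¹ * ((e^2/2) * ((√2*√(K:ℝ)) * (√2*√(m:ℝ))))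
          = e^2 * √(m:ℝ) / 3 := by
        rw [show (√2*√(K:ℝ))*(√2*√(m:ℝ)) = (√2*√2)*(√(K:ℝ)*√(m:ℝ)) by ring, h2']
        field_simp
      rw [hL]
      exact sc_lo' (N:ℝ) (m:ℝ) hNpos hmpos hNm
    calc (1/3 : ℝ) * (√(K:ℝ))⁻¹ * ((N:ℝ)^N / ((K:ℝ)^K * (m:ℝ)^m)) *
          ((e^2/2) * (√(2*(K:ℝ)) * √(2*(m:ℝ))) * ((K:ℝ)^K * (m:ℝ)^m) / e^N)
        = ((1/3 : ℝ) * (√(K:ℝ))⁻¹ * ((e^2/2) * (√(2*(K:ℝ)) * √(2*(m:ℝ)))))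
            * ((N:ℝ)^N / e^N) := by field_simp
      _ ≤ (√π * √(2*(N:ℝ))) * ((N:ℝ)^N / e^N) :=
          mul_le_mul_of_nonneg_right hscal (by positivity)
      _ = √π * pn := by rw [hpnfac]; ring
  · -- upper bound
    have hup : (N.choose K : ℝ) ≤ ((e/√2) * pn) / ((√π * pk) * (√π * pm)) := by
      rw [hC]
      apply div_le_div₀ (by positivity) (stirling_ub' N hN) (by positivity)
      exact mul_le_mul (stirling_lb' K hK) (stirling_lb' m hm0) (by positivity) (by positivity)
    refine hup.trans ?_
    rw [hA, div_le_iff₀ (by rw [← hA]; positivity)]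
    have hscal : (e/√2) * √(2*(N:ℝ))
        ≤ (√(K:ℝ))⁻¹ * (π * (√(2*(K:ℝ)) * √(2*(m:ℝ)))) := by
      rw [hsplitK, hsplitm, hsplitN]
      have hL : (e/√2) * (√2*√(N:ℝ)) = e * √(N:ℝ) := by
        field_simp
      have hR : (√(K:ℝ))⁻¹ * (π * ((√2*√(K:ℝ)) * (√2*√(m:ℝ)))) = 2*(π*√(m:ℝ)) := by
        rw [show (√2*√(K:ℝ))*(√2*√(m:ℝ)) = (√2*√2)*(√(K:ℝ)*√(m:ℝ)) by ring, h2']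
        field_simp
      rw [hL, hR]
      exact sc_up' (N:ℝ) (m:ℝ) hNpos hmpos hm3
    calc (e/√2) * pn = ((e/√2) * √(2*(N:ℝ))) * ((N:ℝ)^N / e^N) := by
          rw [hpnfac]; ring
      _ ≤ ((√(K:ℝ))⁻¹ * (π * (√(2*(K:ℝ)) * √(2*(m:ℝ))))) * ((N:ℝ)^N / e^N) :=
          mul_le_mul_of_nonneg_right hscal (by positivity)
      _ = (√(K:ℝ))⁻¹ * ((N:ℝ)^N / ((K:ℝ)^K * (m:ℝ)^m)) *
          (π * (√(2*(K:ℝ)) * √(2*(m:ℝ))) * ((K:ℝ)^K * (m:ℝ)^m) / e^N) := by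
          field_simp
end

section
/- Let n ≥ 2k, p ≥ 2, and let k_1,...,k_p ≥ 2 with k_1+···+k_p = k, and n_1,...,n_p with n_1+···+n_p = n and n_p = min_i n_i (so n_p ≤ n/p). Then C(n − n_p, k − k_p)·C(n_p, k_p) ≤ (k/n)·C(n,k)·n_p. -/
/-- For `n ≥ 2k`, `p ≥ 2`, `kᵢ ≥ 2` with `∑kᵢ = k`, `∑nᵢ = n` and `n_p` the
minimal `nᵢ`, we have `C(n − n_p, k − k_p)·C(n_p, k_p) ≤ (k/n)·C(n,k)·n_p`. -/
theorem stmt4 (p n k : ℕ) (hp : 2 ≤ p) (hnk : 2 * k ≤ n)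
    (ks ns : Fin p → ℕ) (hki : ∀ i, 2 ≤ ks i)
    (hsumk : ∑ i, ks i = k) (hsumn : ∑ i, ns i = n)
    (last : Fin p) (hlast : last = ⟨p - 1, by omega⟩)
    (hmin : ∀ i, ns last ≤ ns i) :
    (((n - ns last).choose (k - ks last) : ℝ)) * ((ns last).choose (ks last) : ℝ) ≤
      ((k : ℝ) / (n : ℝ)) * (n.choose k : ℝ) * (ns last : ℝ) := by
  set np := ns last with hnp
  set kp := ks last with hkp
  have hkp2 : 2 ≤ kp := hki last
  have hkpk : kp ≤ k := hsumk ▸ Finset.single_le_sum (f := ks)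
    (fun i _ => Nat.zero_le _) (Finset.mem_univ last)
  have hnpn : np ≤ n := hsumn ▸ Finset.single_le_sum (f := ns)
    (fun i _ => Nat.zero_le _) (Finset.mem_univ last)
  have hn0 : 0 < n := by omega
  by_cases hcase : np < kp
  · rw [Nat.choose_eq_zero_of_lt hcase]
    simp only [Nat.cast_zero, mul_zero]
    positivity
  push_neg at hcase
  have hnp1 : 1 ≤ np := by omega
  -- kp * C(np, kp) = np * C(np-1, kp-1)
  have h1 : np.choose kp * kp = np * (np - 1).choose (kp - 1) := by
    have := Nat.add_one_mul_choose_eq (np - 1) (kp - 1)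
    have e1 : np - 1 + 1 = np := by omega
    have e2 : kp - 1 + 1 = kp := by omega
    simp only [Nat.succ_eq_add_one, e1, e2] at this
    omega
  -- Vandermonde: C(n-np, k-kp) * C(np-1, kp-1) ≤ C(n-1, k-1)
  have h2 : (n - np).choose (k - kp) * (np - 1).choose (kp - 1) ≤
      (n - 1).choose (k - 1) := by
    have hsum : (n - np) + (np - 1) = n - 1 := by omega
    rw [← hsum, Nat.add_choose_eq]
    have hmem : ((k - kp, kp - 1) : ℕ × ℕ) ∈ Finset.HasAntidiagonal.antidiagonal (k - 1) :=
      Finset.HasAntidiagonal.mem_antidiagonal.mpr (by omega)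
    exact Finset.single_le_sum (f := fun ij : ℕ × ℕ => (n - np).choose ij.1 * (np - 1).choose ij.2)
      (fun _ _ => Nat.zero_le _) hmem
  -- n * C(n-1, k-1) = C(n,k) * k
  have h3 : n * (n - 1).choose (k - 1) = n.choose k * k := by
    have := Nat.add_one_mul_choose_eq (n - 1) (k - 1)
    have e1 : n - 1 + 1 = n := by omega
    have e2 : k - 1 + 1 = k := by omega
    simp only [Nat.succ_eq_add_one, e1, e2] at this
    exact this
  have key : n * ((n - np).choose (k - kp) * np.choose kp) ≤ k * n.choose k * np := by
    have step : n * ((n - np).choose (k - kp) * np.choose kp) * kp ≤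
        k * n.choose k * np := by
      calc n * ((n - np).choose (k - kp) * np.choose kp) * kp
          = n * ((n - np).choose (k - kp) * (np.choose kp * kp)) := by ring
        _ = n * ((n - np).choose (k - kp) * (np * (np - 1).choose (kp - 1))) := by rw [h1]
        _ = (n * ((n - np).choose (k - kp) * (np - 1).choose (kp - 1))) * np := by ring
        _ ≤ (n * (n - 1).choose (k - 1)) * np := by
            exact Nat.mul_le_mul_right np (Nat.mul_le_mul_left n h2)
        _ = k * n.choose k * np := by rw [h3]; ring
    calc n * ((n - np).choose (k - kp) * np.choose kp)
        ≤ n * ((n - np).choose (k - kp) * np.choose kp) * kp :=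
          Nat.le_mul_of_pos_right _ (by omega)
      _ ≤ k * n.choose k * np := step
  rw [div_mul_eq_mul_div, div_mul_eq_mul_div, le_div_iff₀ (by positivity)]
  have : (n : ℝ) * ((n - np).choose (k - kp) * np.choose kp) ≤ k * n.choose k * np := by
    exact_mod_cast key
  nlinarith [this]
end

section
/- Define real numbers f_i(z) = z^z/(k_i^{k_i}·(z−k_i)^{z−k_i}) for z > k_i. The function F(z_1,...,z_p) = f_1(z_1)···f_p(z_p) subject to z_1+···+z_p = n and z_i ≥ 1.5·k_i attains its maximum value n^n/(k^k·(n−k)^{n−k}) where k = k_1+···+k_p, provided n ≥ 2k. In particular F(z_1,...,z_p) ≤ n^n/(k^k·(n−k)^{n−k}) on this domain. -/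
open Real

private noncomputable def Lfun (z a : ℝ) : ℝ :=
  z * Real.log z - a * Real.log a - (z - a) * Real.log (z - a)

private lemma key_ineq (a b A B : ℝ) (ha : 0 < a) (hb : 0 < b) (hA : 0 < A) (hB : 0 < B) :
    a - b * A / B ≤ a * (log a + log B - log b - log A) := by
  have h := Real.log_le_sub_one_of_pos (show (0:ℝ) < b * A / (a * B) by positivity)
  have e : log (b * A / (a * B)) = log b + log A - log a - log B := by
    rw [Real.log_div (by positivity) (by positivity), Real.log_mul hb.ne' hA.ne',
      Real.log_mul ha.ne' hB.ne']
    ring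
  rw [e] at h
  have h2 : a * (log b + log A - log a - log B) ≤ a * (b * A / (a * B) - 1) :=
    mul_le_mul_of_nonneg_left h ha.le
  have e2 : a * (b * A / (a * B) - 1) = b * A / B - a := by
    field_simp
  nlinarith [h2]

private lemma logsum2 (a1 a2 b1 b2 : ℝ) (ha1 : 0 < a1) (ha2 : 0 < a2)
    (hb1 : 0 < b1) (hb2 : 0 < b2) :
    (a1 + a2) * log ((a1 + a2) / (b1 + b2)) ≤ a1 * log (a1 / b1) + a2 * log (a2 / b2) := by
  have hA : (0:ℝ) < a1 + a2 := by linarith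
  have hB : (0:ℝ) < b1 + b2 := by linarith
  have k1 := key_ineq a1 b1 (a1 + a2) (b1 + b2) ha1 hb1 hA hB
  have k2 := key_ineq a2 b2 (a1 + a2) (b1 + b2) ha2 hb2 hA hB
  have hid : b1 * (a1 + a2) / (b1 + b2) + b2 * (a1 + a2) / (b1 + b2) = a1 + a2 := by
    field_simp
  rw [Real.log_div hA.ne' hB.ne', Real.log_div ha1.ne' hb1.ne', Real.log_div ha2.ne' hb2.ne']
  nlinarith [k1, k2]

private lemma Lfun_form (z a : ℝ) (ha : 0 < a) (haz : a < z) :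
    Lfun z a = -(a * log (a / z) + (z - a) * log ((z - a) / z)) := by
  have hz : (0:ℝ) < z := lt_trans ha haz
  have hza : (0:ℝ) < z - a := by linarith
  rw [Lfun, Real.log_div ha.ne' hz.ne', Real.log_div hza.ne' hz.ne']
  ring

private lemma Lfun_superadd (z1 a1 z2 a2 : ℝ) (ha1 : 0 < a1) (h1 : a1 < z1)
    (ha2 : 0 < a2) (h2 : a2 < z2) :
    Lfun z1 a1 + Lfun z2 a2 ≤ Lfun (z1 + z2) (a1 + a2) := by
  have hz1 : (0:ℝ) < z1 := lt_trans ha1 h1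
  have hz2 : (0:ℝ) < z2 := lt_trans ha2 h2
  have hA : (0:ℝ) < a1 + a2 := by linarith
  have hAZ : a1 + a2 < z1 + z2 := by linarith
  rw [Lfun_form z1 a1 ha1 h1, Lfun_form z2 a2 ha2 h2, Lfun_form _ _ hA hAZ]
  have t1 := logsum2 a1 a2 z1 z2 ha1 ha2 hz1 hz2
  have t2 := logsum2 (z1 - a1) (z2 - a2) z1 z2 (by linarith) (by linarith) hz1 hz2
  have e : z1 + z2 - (a1 + a2) = (z1 - a1) + (z2 - a2) := by ring
  rw [e]
  linarith

private lemma Lfun_sum {ι : Type*} (s : Finset ι) (hs : s.Nonempty) (z a : ι → ℝ)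
    (h : ∀ i ∈ s, 0 < a i ∧ a i < z i) :
    ∑ i ∈ s, Lfun (z i) (a i) ≤ Lfun (∑ i ∈ s, z i) (∑ i ∈ s, a i) := by
  induction hs using Finset.Nonempty.cons_induction with
  | singleton i => simp
  | cons i s hi hne ih =>
    rw [Finset.sum_cons, Finset.sum_cons, Finset.sum_cons]
    have hs' : ∀ j ∈ s, 0 < a j ∧ a j < z j := fun j hj => h j (Finset.mem_cons_of_mem hj)
    have hi' := h i (Finset.mem_cons_self i _)
    have hsa : 0 < ∑ j ∈ s, a j := Finset.sum_pos (fun j hj => (hs' j hj).1) hne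
    have hsz : (∑ j ∈ s, a j) < ∑ j ∈ s, z j :=
      Finset.sum_lt_sum_of_nonempty hne (fun j hj => (hs' j hj).2)
    calc Lfun (z i) (a i) + ∑ j ∈ s, Lfun (z j) (a j)
        ≤ Lfun (z i) (a i) + Lfun (∑ j ∈ s, z j) (∑ j ∈ s, a j) := by linarith [ih hs']
      _ ≤ Lfun (z i + ∑ j ∈ s, z j) (a i + ∑ j ∈ s, a j) :=
          Lfun_superadd _ _ _ _ hi'.1 hi'.2 hsa hsz

private lemma f_eq (z a : ℝ) (ha : 0 < a) (haz : a < z) :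
    z ^ z / (a ^ a * (z - a) ^ (z - a)) = Real.exp (Lfun z a) := by
  have hz : (0:ℝ) < z := lt_trans ha haz
  have hza : (0:ℝ) < z - a := by linarith
  rw [Real.rpow_def_of_pos hz, Real.rpow_def_of_pos ha, Real.rpow_def_of_pos hza,
    ← Real.exp_add, ← Real.exp_sub]
  congr 1
  rw [Lfun]; ring

private lemma Lfun_scale (t a : ℝ) (ha : 0 < a) (ht : (2:ℝ) ≤ t) :
    Lfun (t * a) a = a * (t * log t - (t - 1) * log (t - 1)) := by
  have ht0 : (0:ℝ) < t := by linarith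
  have ht1 : (0:ℝ) < t - 1 := by linarith
  have e : t * a - a = (t - 1) * a := by ring
  rw [Lfun, e, Real.log_mul ht0.ne' ha.ne', Real.log_mul ht1.ne' ha.ne']
  ring

/-- The function `F(z₁,…,z_p) = ∏ᵢ zᵢ^zᵢ/(kᵢ^kᵢ·(zᵢ−kᵢ)^(zᵢ−kᵢ))` on the domain
`∑zᵢ = n`, `zᵢ ≥ 1.5·kᵢ` attains its maximum `n^n/(k^k·(n−k)^(n−k))` where
`k = ∑kᵢ`, provided `n ≥ 2k`; in particular `F ≤ n^n/(k^k·(n−k)^(n−k))` there. -/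
theorem stmt5 (p : ℕ) (hp : 0 < p) (ks : Fin p → ℝ) (hks : ∀ i, 0 < ks i)
    (n k : ℝ) (hk : k = ∑ i, ks i) (hnk : 2 * k ≤ n) :
    (∃ z : Fin p → ℝ, (∑ i, z i = n) ∧ (∀ i, 1.5 * ks i ≤ z i) ∧
      (∏ i, (z i) ^ (z i) / ((ks i) ^ (ks i) * (z i - ks i) ^ (z i - ks i))) =
        n ^ n / (k ^ k * (n - k) ^ (n - k))) ∧
    (∀ z : Fin p → ℝ, (∑ i, z i = n) → (∀ i, 1.5 * ks i ≤ z i) →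
      (∏ i, (z i) ^ (z i) / ((ks i) ^ (ks i) * (z i - ks i) ^ (z i - ks i))) ≤
        n ^ n / (k ^ k * (n - k) ^ (n - k))) := by
  haveI : Nonempty (Fin p) := ⟨⟨0, hp⟩⟩
  have hne : (Finset.univ : Finset (Fin p)).Nonempty := Finset.univ_nonempty
  have hk0 : 0 < k := by
    rw [hk]; exact Finset.sum_pos (fun i _ => hks i) hne
  have hkn : k < n := by linarith
  have hRHS : n ^ n / (k ^ k * (n - k) ^ (n - k)) = Real.exp (Lfun n k) :=
    f_eq n k hk0 hkn
  have ht : (2:ℝ) ≤ n / k := by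
    rw [le_div_iff₀ hk0]; linarith
  constructor
  · refine ⟨fun i => (n / k) * ks i, ?_, ?_, ?_⟩
    · rw [← Finset.mul_sum, ← hk]
      field_simp
    · intro i
      have := hks i
      nlinarith
    · have hterm : ∀ i : Fin p,
          ((n / k) * ks i) ^ ((n / k) * ks i) /
            ((ks i) ^ (ks i) * ((n / k) * ks i - ks i) ^ ((n / k) * ks i - ks i)) =
          Real.exp (Lfun ((n / k) * ks i) (ks i)) := by
        intro i
        exact f_eq _ _ (hks i) (by nlinarith [hks i])
      rw [Finset.prod_congr rfl (fun i _ => hterm i), ← Real.exp_sum, hRHS]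
      congr 1
      have hn : n = (n / k) * k := by field_simp
      calc ∑ i, Lfun ((n / k) * ks i) (ks i)
          = ∑ i, ks i * ((n / k) * log (n / k) - (n / k - 1) * log (n / k - 1)) := by
            exact Finset.sum_congr rfl (fun i _ => Lfun_scale _ _ (hks i) ht)
        _ = k * ((n / k) * log (n / k) - (n / k - 1) * log (n / k - 1)) := by
            rw [← Finset.sum_mul, ← hk]
        _ = Lfun ((n / k) * k) k := (Lfun_scale _ _ hk0 ht).symm
        _ = Lfun n k := by rw [← hn]
  · intro z hsum hge
    have hzi : ∀ i, ks i < z i := fun i => by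
      have h1 := hks i; have h2 := hge i; nlinarith
    have hterm : ∀ i : Fin p,
        (z i) ^ (z i) / ((ks i) ^ (ks i) * (z i - ks i) ^ (z i - ks i)) =
        Real.exp (Lfun (z i) (ks i)) := fun i => f_eq _ _ (hks i) (hzi i)
    rw [Finset.prod_congr rfl (fun i _ => hterm i), ← Real.exp_sum, hRHS]
    rw [Real.exp_le_exp]
    have := Lfun_sum Finset.univ hne z ks (fun i _ => ⟨hks i, hzi i⟩)
    rwa [hsum, ← hk] at this
end

section
/- Let f = f_1·f_2···f_p be a product of multilinear homogeneous polynomials over disjoint variable sets, where f_i has degree k_i and is in n_i variables, with k_1+···+k_p = k, n_1+···+n_p ≤ n, n ≥ 2k, and k_p = 1. Then the number of monomials with nonzero coefficient in f is at most 3·k^(3/2)·(k_1···k_{p-1})^{-1/2}·C(n,k)·n_p/n. -/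
open MvPolynomial Pointwise

-- (I): (m+1) * C(m,K) = C(m+1,K) * (m+1-K)
lemma chooseRow (m K : ℕ) : (m+1) * m.choose K = (m+1).choose K * (m+1-K) := by
  have h1 := Nat.add_one_mul_choose_eq m K
  have h2 := Nat.choose_succ_right_eq (m+1) K
  omega

-- Lemma A: unimodality base
lemma lemA (r s : ℕ) : ∀ d, d ≤ 2*s →
    (2*r+d).choose r * (2*s-d).choose s ≤ (2*r).choose r * (2*s).choose s := by
  intro d
  induction d with
  | zero => intro _; simp
  | succ d ih =>
    intro hd
    by_cases hds : d + 1 ≤ s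
    · -- step: C(A+1,r)*C(B,s) ≤ C(A,r)*C(B+1,s) with A = 2r+d, B = 2s-d-1
      have key : (2*r+d+1).choose r * (2*s-(d+1)).choose s ≤
          (2*r+d).choose r * (2*s-d).choose s := by
        set A := 2*r+d with hA
        obtain ⟨e, he⟩ : ∃ e, s = d + 1 + e := ⟨s - (d+1), by omega⟩
        have hB : 2*s-(d+1) = s + e := by omega
        have hB1 : 2*s-d = s + e + 1 := by omega
        rw [hB, hB1]
        -- identities
        have i1 : (A+1) * A.choose r = (A+1).choose r * (A+1-r) := chooseRow A r
        have i2 : (s+e+1) * (s+e).choose s = (s+e+1).choose s * (s+e+1-s) := chooseRow (s+e) s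
        have hA1r : A+1-r = r+d+1 := by omega
        have hse : s+e+1-s = e+1 := by omega
        rw [hA1r] at i1
        rw [hse] at i2
        -- goal: C(A+1,r)*C(s+e,s) ≤ C(A,r)*C(s+e+1,s)
        -- multiply both sides by (r+d+1)*(e+1)
        have hpos : 0 < (r+d+1)*(e+1) := by positivity
        refine Nat.le_of_mul_le_mul_right ?_ hpos
        calc (A+1).choose r * (s+e).choose s * ((r+d+1)*(e+1))
            = ((A+1).choose r * (r+d+1)) * ((s+e).choose s * (e+1)) := by ring
          _ = ((A+1) * A.choose r) * ((s+e).choose s * (e+1)) := by rw [i1]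
          _ = A.choose r * (s+e).choose s * ((A+1)*(e+1)) := by ring
          _ ≤ A.choose r * (s+e).choose s * ((r+d+1)*(s+e+1)) := by
              apply Nat.mul_le_mul_left
              -- (A+1)*(e+1) ≤ (r+d+1)*(s+e+1), A+1 = 2r+d+1, s = d+1+e
              have : (2*r+d+1)*(e+1) ≤ (r+d+1)*(s+e+1) := by nlinarith
              simpa [hA] using this
          _ = A.choose r * ((s+e+1) * (s+e).choose s) * (r+d+1) := by ring
          _ = A.choose r * ((s+e+1).choose s * (e+1)) * (r+d+1) := by rw [i2]
          _ = A.choose r * (s+e+1).choose s * ((r+d+1)*(e+1)) := by ring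
      exact key.trans (ih (by omega))
    · -- zero case: 2s-(d+1) < s
      have h0 : (2*s-(d+1)).choose s = 0 := Nat.choose_eq_zero_of_lt (by omega)
      simp [h0]

set_option maxHeartbeats 1000000 in
lemma rstar2 (r s : ℕ) : ∀ M a b, 2*r ≤ a → a+b ≤ M → 2*(r+s) ≤ M →
    a.choose r * b.choose s * (2*(r+s)).choose (r+s) ≤
    M.choose (r+s) * ((2*r).choose r * (2*s).choose s) := by
  intro M
  induction M using Nat.strong_induction_on with
  | _ M IH =>
    intro a b har hab hKM
    rcases Nat.eq_zero_or_pos r with hr | hr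
    · subst hr
      have h1 : b.choose s ≤ M.choose s := Nat.choose_le_choose s (by omega)
      have e1 : a.choose 0 = 1 := Nat.choose_zero_right a
      have e2 : (2*(0+s)).choose (0+s) = (2*s).choose s := by norm_num
      have e3 : (2*0).choose 0 = 1 := by norm_num
      rw [e1, e3]
      simp only [Nat.zero_add, one_mul]
      exact Nat.mul_le_mul_right _ h1
    rcases Nat.eq_zero_or_pos s with hs | hs
    · subst hs
      have h1 : a.choose r ≤ M.choose r := Nat.choose_le_choose r (by omega)
      have e1 : b.choose 0 = 1 := Nat.choose_zero_right b
      rw [e1]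
      simp only [Nat.add_zero, Nat.mul_one, mul_one]
      have e3 : (2*0).choose 0 = 1 := by norm_num
      rw [e3, mul_one]
      exact Nat.mul_le_mul_right _ h1
    rcases Nat.lt_or_ge (2*(r+s)) M with hM | hM
    swap
    · -- M = 2(r+s)
      have hM2 : M = 2*(r+s) := by omega
      subst hM2
      have hb' : b.choose s ≤ (2*(r+s) - a).choose s := Nat.choose_le_choose s (by omega)
      have hd : a - 2*r ≤ 2*s := by omega
      have h1 := lemA r s (a - 2*r) hd
      have ha2 : 2*r + (a - 2*r) = a := by omega
      have hb2 : 2*s - (a - 2*r) = 2*(r+s) - a := by omega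
      rw [ha2, hb2] at h1
      calc a.choose r * b.choose s * (2*(r+s)).choose (r+s)
          ≤ a.choose r * (2*(r+s) - a).choose s * (2*(r+s)).choose (r+s) :=
            Nat.mul_le_mul_right _ (Nat.mul_le_mul_left _ hb')
        _ ≤ ((2*r).choose r * (2*s).choose s) * (2*(r+s)).choose (r+s) :=
            Nat.mul_le_mul_right _ h1
        _ = (2*(r+s)).choose (r+s) * ((2*r).choose r * (2*s).choose s) := by ring
    · rcases Nat.lt_or_ge (a+b) M with hab' | hab'
      · have := IH (M-1) (by omega) a b har (by omega) (by omega)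
        exact this.trans (Nat.mul_le_mul_right _ (Nat.choose_le_choose (r+s) (by omega)))
      · have habM : a + b = M := by omega
        have hcase : r*M ≤ a*(r+s) ∨ s*M ≤ b*(r+s) := by
          by_contra hc
          push_neg at hc
          obtain ⟨h1, h2⟩ := hc
          nlinarith
        have iM : M * (M-1).choose (r+s) = M.choose (r+s) * (M-(r+s)) := by
          have h := chooseRow (M-1) (r+s)
          have hM1 : M - 1 + 1 = M := by omega
          rw [hM1] at h
          omega
        rcases hcase with hca | hcb
        · -- decrement a
          have ha1 : 2*r ≤ a - 1 := by
            rcases Nat.lt_or_ge (a-1) (2*r) with h | h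
            · exfalso
              have h2 : a ≤ 2*r := by omega
              have h3 : a*(r+s) ≤ 2*r*(r+s) := Nat.mul_le_mul_right _ h2
              have h4 : r*(2*(r+s)+1) ≤ r*M := Nat.mul_le_mul_left _ (by omega)
              nlinarith
            · exact h
          have IH1 := IH (M-1) (by omega) (a-1) b ha1 (by omega) (by omega)
          have ia : a * (a-1).choose r = a.choose r * (a-r) := by
            have h := chooseRow (a-1) r
            have ha2 : a - 1 + 1 = a := by omega
            rw [ha2] at h
            omega
          have hpos : 0 < (a-r)*M := Nat.mul_pos (by omega) (by omega)
          refine Nat.le_of_mul_le_mul_right ?_ hpos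
          have hkey : a*(M-(r+s)) ≤ (a-r)*M := by
            have h1 : r ≤ a := by omega
            have h2 : r+s ≤ M := by omega
            have hca' : (r:ℤ)*M ≤ (a:ℤ)*(r+s) := by exact_mod_cast hca
            zify [h1, h2]
            nlinarith [hca']
          set x := a.choose r
          set x' := (a-1).choose r
          set y := b.choose s
          set z := (2*(r+s)).choose (r+s)
          set w := (M-1).choose (r+s)
          set W := M.choose (r+s)
          set G := (2*r).choose r * (2*s).choose s
          calc x * y * z * ((a-r)*M)
              = (x * (a-r)) * (y * z) * M := by ring
            _ = (a * x') * (y * z) * M := by rw [ia]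
            _ = (x' * y * z) * (a * M) := by ring
            _ ≤ (w * G) * (a * M) := Nat.mul_le_mul_right _ IH1
            _ = (M * w) * G * a := by ring
            _ = (W * (M-(r+s))) * G * a := by rw [iM]
            _ = (W * G) * (a * (M-(r+s))) := by ring
            _ ≤ (W * G) * ((a-r) * M) := Nat.mul_le_mul_left _ hkey
        · -- decrement b
          have hb1 : s + 1 ≤ b := by
            rcases Nat.lt_or_ge b (s+1) with h | h
            · exfalso
              have h3 : b*(r+s) ≤ s*(r+s) := Nat.mul_le_mul_right _ (by omega)
              have h4 : s*(2*(r+s)+1) ≤ s*M := Nat.mul_le_mul_left _ (by omega)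
              nlinarith
            · exact h
          have IH1 := IH (M-1) (by omega) a (b-1) har (by omega) (by omega)
          have ib : b * (b-1).choose s = b.choose s * (b-s) := by
            have h := chooseRow (b-1) s
            have hb2 : b - 1 + 1 = b := by omega
            rw [hb2] at h
            omega
          have hpos : 0 < (b-s)*M := Nat.mul_pos (by omega) (by omega)
          refine Nat.le_of_mul_le_mul_right ?_ hpos
          have hkey : b*(M-(r+s)) ≤ (b-s)*M := by
            have h1 : s ≤ b := by omega
            have h2 : r+s ≤ M := by omega
            have hcb' : (s:ℤ)*M ≤ (b:ℤ)*(r+s) := by exact_mod_cast hcb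
            zify [h1, h2]
            nlinarith [hcb']
          set x := a.choose r
          set y := b.choose s
          set y' := (b-1).choose s
          set z := (2*(r+s)).choose (r+s)
          set w := (M-1).choose (r+s)
          set W := M.choose (r+s)
          set G := (2*r).choose r * (2*s).choose s
          calc x * y * z * ((b-s)*M)
              = (y * (b-s)) * (x * z) * M := by ring
            _ = (b * y') * (x * z) * M := by rw [ib]
            _ = (x * y' * z) * (b * M) := by ring
            _ ≤ (w * G) * (b * M) := Nat.mul_le_mul_right _ IH1
            _ = (M * w) * G * b := by ring
            _ = (W * (M-(r+s))) * G * b := by rw [iM]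
            _ = (W * G) * (b * (M-(r+s))) := by ring
            _ ≤ (W * G) * ((b-s) * M) := Nat.mul_le_mul_left _ hkey

lemma rstarMulti {ι : Type*} [DecidableEq ι] (s : Finset ι) (nf kf : ι → ℕ) :
    (∏ i ∈ s, (nf i).choose (kf i)) * (2*(∑ i ∈ s, kf i)).choose (∑ i ∈ s, kf i) ≤
    (max (∑ i ∈ s, nf i) (2*(∑ i ∈ s, kf i))).choose (∑ i ∈ s, kf i) *
      ∏ i ∈ s, (2*(kf i)).choose (kf i) := by
  induction s using Finset.strongInductionOn with
  | _ s IH =>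
    rcases Finset.eq_empty_or_nonempty s with rfl | hne
    · simp
    · -- find j with 2*(K - kf j) + nf j ≤ M
      set S := ∑ i ∈ s, nf i with hS
      set K := ∑ i ∈ s, kf i with hK
      set M := max S (2*K) with hM
      have hSM : S ≤ M := le_max_left _ _
      have hKM : 2*K ≤ M := le_max_right _ _
      have hex : ∃ j ∈ s, 2*K + nf j ≤ M + 2*(kf j) := by
        by_contra hc
        push_neg at hc
        have hsum : ∀ j ∈ s, M + 1 + 2*(kf j) ≤ 2*K + nf j := fun j hj => by
          have := hc j hj; omega
        have h1 : ∑ j ∈ s, (M + 1 + 2*(kf j)) ≤ ∑ j ∈ s, (2*K + nf j) :=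
          Finset.sum_le_sum hsum
        have e1 : ∑ j ∈ s, (M + 1 + 2*(kf j)) = s.card*(M+1) + 2*K := by
          rw [Finset.sum_add_distrib, Finset.sum_const, ← Finset.mul_sum, ← hK, smul_eq_mul]
        have e2 : ∑ j ∈ s, (2*K + nf j) = s.card*(2*K) + S := by
          rw [Finset.sum_add_distrib, Finset.sum_const, ← hS, smul_eq_mul]
        rw [e1, e2] at h1
        have hcard : 1 ≤ s.card := Finset.card_pos.mpr hne
        have h3 : s.card * (2*K) ≤ s.card * M := Nat.mul_le_mul_left _ hKM
        have h4 : s.card * (M+1) = s.card * M + s.card := by ring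
        have h5 : 2*K + s.card ≤ S := by omega
        have h6 : M = S := by rw [hM, max_eq_left (by omega)]
        rw [h6] at h1
        obtain ⟨c, hc1⟩ : ∃ c, s.card = c + 1 := ⟨s.card - 1, by omega⟩
        rw [hc1] at h1
        have h7 : c * (2*K) ≤ c * S := Nat.mul_le_mul_left _ (by omega)
        have h8 : (c+1) * (S+1) = c*S + S + c + 1 := by ring
        have h9 : (c+1) * (2*K) = c*(2*K) + 2*K := by ring
        omega
      obtain ⟨j, hj, hjle⟩ := hex
      set s' := s.erase j with hs'
      have hsub : s' ⊂ s := Finset.erase_ssubset hj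
      have IH1 := IH s' hsub
      set S' := ∑ i ∈ s', nf i with hS'
      set K' := ∑ i ∈ s', kf i with hK'
      have hSsplit : S' + nf j = S := by rw [hS', hS]; exact Finset.sum_erase_add s nf hj
      have hKsplit : K' + kf j = K := by rw [hK', hK]; exact Finset.sum_erase_add s kf hj
      set M' := max S' (2*K') with hM'
      -- rstar2 application
      have hr2 := rstar2 K' (kf j) M M' (nf j) (le_max_right _ _)
        (by
          have h1 : S' ≤ M' := le_max_left _ _
          have h2 : max S' (2*K') + nf j = max (S' + nf j) (2*K' + nf j) := by
            rcases le_total S' (2*K') with h | h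
            · rw [max_eq_right h, max_eq_right (by omega)]
            · rw [max_eq_left h, max_eq_left (by omega)]
          rw [← hM'] at h2
          rw [h2, hSsplit]
          have : 2*K' + nf j ≤ M := by omega
          omega)
        (by rw [hKsplit]; exact hKM)
      rw [hKsplit] at hr2
      -- assemble
      have hprodn : (∏ i ∈ s, (nf i).choose (kf i)) =
          (∏ i ∈ s', (nf i).choose (kf i)) * (nf j).choose (kf j) :=
        (Finset.prod_erase_mul s _ hj).symm
      have hprodc : (∏ i ∈ s, (2*(kf i)).choose (kf i)) =
          (∏ i ∈ s', (2*(kf i)).choose (kf i)) * (2*(kf j)).choose (kf j) :=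
        (Finset.prod_erase_mul s _ hj).symm
      have hcpos : 0 < (2*K').choose K' := Nat.choose_pos (by omega)
      refine Nat.le_of_mul_le_mul_right ?_ hcpos
      set X := ∏ i ∈ s', (nf i).choose (kf i)
      set G := ∏ i ∈ s', (2*(kf i)).choose (kf i)
      set c' := (2*K').choose K'
      calc (∏ i ∈ s, (nf i).choose (kf i)) * (2*K).choose K * c'
          = (X * c') * ((nf j).choose (kf j) * (2*K).choose K) := by rw [hprodn]; ring
        _ ≤ (M'.choose K' * G) * ((nf j).choose (kf j) * (2*K).choose K) :=
            Nat.mul_le_mul_right _ IH1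
        _ = G * (M'.choose K' * (nf j).choose (kf j) * (2*K).choose K) := by ring
        _ ≤ G * (M.choose K * (c' * (2*(kf j)).choose (kf j))) :=
            Nat.mul_le_mul_left _ hr2
        _ = (M.choose K * (G * (2*(kf j)).choose (kf j))) * c' := by ring
        _ = M.choose K * (∏ i ∈ s, (2*(kf i)).choose (kf i)) * c' := by rw [hprodc]

lemma cb_upper : ∀ m : ℕ, ((2*m).choose m)^2 * (3*m+1) ≤ 16^m := by
  intro m
  induction m with
  | zero => simp
  | succ m ih =>
    have hrec : (m+1) * (2*(m+1)).choose (m+1) = 2*(2*m+1) * (2*m).choose m := by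
      have := Nat.succ_mul_centralBinom_succ m
      simpa [Nat.centralBinom, Nat.mul_succ] using this
    have hpos : 0 < (m+1)^2 * (3*m+1) := by positivity
    refine Nat.le_of_mul_le_mul_right ?_ hpos
    set c := (2*m).choose m
    set c' := (2*(m+1)).choose (m+1)
    have key : (2*m+1)^2 * (3*(m+1)+1) ≤ 4 * (m+1)^2 * (3*m+1) := by nlinarith
    calc c'^2 * (3*(m+1)+1) * ((m+1)^2 * (3*m+1))
        = ((m+1)*c')^2 * ((3*(m+1)+1) * (3*m+1)) := by ring
      _ = (2*(2*m+1)*c)^2 * ((3*(m+1)+1) * (3*m+1)) := by rw [hrec]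
      _ = (c^2 * (3*m+1)) * (4 * ((2*m+1)^2 * (3*(m+1)+1))) := by ring
      _ ≤ 16^m * (4 * (4 * (m+1)^2 * (3*m+1))) := by
          apply Nat.mul_le_mul ih
          exact Nat.mul_le_mul_left _ key
      _ = 16^(m+1) * ((m+1)^2 * (3*m+1)) := by ring
lemma cb_lower : ∀ K : ℕ, 1 ≤ K → 16^K ≤ 4*K * ((2*K).choose K)^2 := by
  intro K
  induction K with
  | zero => omega
  | succ m ih =>
    intro _
    rcases Nat.eq_zero_or_pos m with rfl | hm
    · norm_num
    have hrec : (m+1) * (2*(m+1)).choose (m+1) = 2*(2*m+1) * (2*m).choose m := by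
      have := Nat.succ_mul_centralBinom_succ m
      simpa [Nat.centralBinom, Nat.mul_succ] using this
    have ih1 := ih hm
    have hpos : 0 < (m+1)^2 := by positivity
    refine Nat.le_of_mul_le_mul_right ?_ hpos
    set c := (2*m).choose m
    set c' := (2*(m+1)).choose (m+1)
    have key : (4*m) * (16*(m+1)^2) ≤ 4*(m+1) * (4*(2*m+1)^2) := by nlinarith
    calc 16^(m+1) * (m+1)^2
        = 16^m * (16*(m+1)^2) := by ring
      _ ≤ (4*m*c^2) * (16*(m+1)^2) := Nat.mul_le_mul_right _ ih1
      _ = ((4*m) * (16*(m+1)^2)) * c^2 := by ring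
      _ ≤ (4*(m+1) * (4*(2*m+1)^2)) * c^2 := Nat.mul_le_mul_right _ key
      _ = 4*(m+1) * (2*(2*m+1)*c)^2 := by ring
      _ = 4*(m+1) * ((m+1)*c')^2 := by rw [hrec]
      _ = (4*(m+1)*c'^2) * (m+1)^2 := by ring

lemma suppProd {σ R : Type*} [CommSemiring R] [DecidableEq σ] {ι : Type*}
    (s : Finset ι) (f : ι → MvPolynomial σ R) :
    (∏ i ∈ s, f i).support.card ≤ ∏ i ∈ s, (f i).support.card := by
  classical
  induction s using Finset.induction_on with
  | empty =>
    simp only [Finset.prod_empty]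
    have h : (1 : MvPolynomial σ R).support ⊆ {0} := by
      intro m hm
      rw [MvPolynomial.mem_support_iff] at hm
      rw [show (1 : MvPolynomial σ R) = MvPolynomial.C 1 from rfl, MvPolynomial.coeff_C] at hm
      simp only [Finset.mem_singleton]
      by_contra hne
      rw [if_neg (fun hc => hne hc.symm)] at hm
      exact hm rfl
    exact le_trans (Finset.card_le_card h) (by simp)
  | @insert a t hni ih =>
    rw [Finset.prod_insert hni, Finset.prod_insert hni]
    calc ((f a) * ∏ i ∈ t, f i).support.card
        ≤ ((f a).support + (∏ i ∈ t, f i).support).card :=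
          Finset.card_le_card (MvPolynomial.support_mul _ _)
      _ ≤ (f a).support.card * (∏ i ∈ t, f i).support.card := Finset.card_add_le
      _ ≤ (f a).support.card * ∏ i ∈ t, (f i).support.card :=
          Nat.mul_le_mul_left _ ih

lemma suppCard {σ R : Type*} [CommSemiring R] [DecidableEq σ]
    (f : MvPolynomial σ R) (k : ℕ) (V : Finset σ)
    (hv : f.vars ⊆ V) (hml : ∀ m ∈ f.support, ∀ j, m j ≤ 1)
    (hhom : f.IsHomogeneous k) :
    f.support.card ≤ V.card.choose k := by
  classical
  have hmap : ∀ m ∈ f.support, m.support ∈ V.powersetCard k := by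
    intro m hm
    rw [Finset.mem_powersetCard]
    refine ⟨fun j hj => hv (MvPolynomial.mem_vars j |>.mpr ⟨m, hm, hj⟩), ?_⟩
    have h := hhom (MvPolynomial.mem_support_iff.mp hm)
    have hw : (Finsupp.weight (1 : σ → ℕ)) m = ∑ j ∈ m.support, m j := by
      simp [Finsupp.weight, Finsupp.linearCombination, Finsupp.sum]
    have hdeg : ∑ j ∈ m.support, m j = k := by rw [← hw]; exact h
    rw [← hdeg, Finset.card_eq_sum_ones]
    apply Finset.sum_congr rfl
    intro j hj
    have h1 := hml m hm j
    have h2 : m j ≠ 0 := Finsupp.mem_support_iff.mp hj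
    omega
  have hinj : Set.InjOn (fun m : σ →₀ ℕ => m.support) (f.support : Set (σ →₀ ℕ)) := by
    intro m hm m' hm' h
    ext j
    have h1 := hml m hm j
    have h2 := hml m' hm' j
    simp only at h
    by_cases hj : j ∈ m.support
    · have hj' : j ∈ m'.support := h ▸ hj
      have := Finsupp.mem_support_iff.mp hj
      have := Finsupp.mem_support_iff.mp hj'
      omega
    · have hj' : j ∉ m'.support := h ▸ hj
      have e1 : m j = 0 := by
        by_contra hc; exact hj (Finsupp.mem_support_iff.mpr hc)
      have e2 : m' j = 0 := by
        by_contra hc; exact hj' (Finsupp.mem_support_iff.mpr hc)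
      omega
  calc f.support.card ≤ (V.powersetCard k).card :=
        Finset.card_le_card_of_injOn _ hmap hinj
    _ = V.card.choose k := by rw [Finset.card_powersetCard]

set_option maxHeartbeats 2000000 in
/-- Let `f = f₁⋯f_p` be a product of multilinear homogeneous polynomials over
pairwise disjoint variable sets, `fᵢ` of degree `kᵢ ≥ 1` in `nᵢ` variables,
with `∑kᵢ = k`, `∑nᵢ ≤ n`, `n ≥ 2k` and `k_p = 1`.  Then `f` has at most
`3·k^(3/2)·(k₁⋯k_{p-1})^(-1/2)·C(n,k)·n_p/n` monomials. -/
theorem stmt12 (p n k : ℕ) (hnk : 2 * k ≤ n)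
    (f : Fin (p + 1) → MvPolynomial (Fin n) ℝ)
    (ks ns : Fin (p + 1) → ℕ)
    (V : Fin (p + 1) → Finset (Fin n))
    (hdisj : ∀ i j, i ≠ j → Disjoint (V i) (V j))
    (hvars : ∀ i, (f i).vars ⊆ V i)
    (hcard : ∀ i, (V i).card = ns i)
    (hml : ∀ i, ∀ m ∈ (f i).support, ∀ j, m j ≤ 1)
    (hhom : ∀ i, (f i).IsHomogeneous (ks i))
    (hki : ∀ i, 1 ≤ ks i) (hklast : ks (Fin.last p) = 1)
    (hsumk : ∑ i, ks i = k) (hsumn : ∑ i, ns i ≤ n) :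
    ((∏ i, f i).support.card : ℝ) ≤
      3 * (k : ℝ) ^ ((3 : ℝ) / 2) *
        ((∏ i : Fin p, (ks i.castSucc : ℝ)) ^ (-(1 : ℝ) / 2)) *
        (n.choose k : ℝ) * (ns (Fin.last p) : ℝ) / (n : ℝ) := by
  classical
  set K := ∑ i : Fin p, ks i.castSucc with hK
  set P := ∏ i : Fin p, ks i.castSucc with hP
  set S' := ∑ i : Fin p, ns i.castSucc with hS'
  set np := ns (Fin.last p) with hnp
  -- basic facts
  have hkK : K + 1 = k := by
    rw [← hsumk, Fin.sum_univ_castSucc, hklast]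
  have hkpos : 1 ≤ k := by omega
  have hn2 : 2 ≤ n := by omega
  have hSn : S' + np ≤ n := by
    rw [Fin.sum_univ_castSucc (f := ns)] at hsumn
    exact hsumn
  -- support bound
  have hsupp1 : ∀ i, (f i).support.card ≤ (ns i).choose (ks i) := by
    intro i
    have := suppCard (f i) (ks i) (V i) (hvars i) (hml i) (hhom i)
    rwa [hcard i] at this
  have hA : ((∏ i, f i).support.card : ℕ) ≤
      (∏ i : Fin p, (ns i.castSucc).choose (ks i.castSucc)) * np := by
    calc (∏ i, f i).support.card ≤ ∏ i, (f i).support.card := suppProd Finset.univ f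
      _ ≤ ∏ i, (ns i).choose (ks i) := Finset.prod_le_prod' (fun i _ => hsupp1 i)
      _ = (∏ i : Fin p, (ns i.castSucc).choose (ks i.castSucc)) * (ns (Fin.last p)).choose (ks (Fin.last p)) :=
          Fin.prod_univ_castSucc _
      _ = (∏ i : Fin p, (ns i.castSucc).choose (ks i.castSucc)) * np := by
          rw [hklast, Nat.choose_one_right]
  -- case p = 0
  rcases Nat.eq_zero_or_pos p with rfl | hp
  · have hK0 : K = 0 := by simp [hK]
    have hk1 : k = 1 := by omega
    subst hk1
    have hcard1 : (∏ i, f i).support.card ≤ np := by simpa using hA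
    have h2 : ((∏ i : Fin 0, (ks i.castSucc : ℝ))) = 1 := by simp
    rw [h2, Real.one_rpow]
    simp only [Nat.cast_one, Real.one_rpow, Nat.choose_one_right, mul_one]
    have hn0 : (n:ℝ) ≠ 0 := by positivity
    have heq : (3:ℝ) * ↑n * ↑np / ↑n = 3 * ↑np := by field_simp
    rw [heq]
    calc ((∏ i, f i).support.card : ℝ) ≤ (np : ℝ) := by exact_mod_cast hcard1
      _ ≤ 3*np := by nlinarith [Nat.cast_nonneg (α := ℝ) np]
  -- case np = 0
  rcases Nat.eq_zero_or_pos np with hnp0 | hnppos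
  · have hfl : f (Fin.last p) = 0 := by
      rw [← MvPolynomial.support_eq_empty]
      by_contra hne
      obtain ⟨m, hm⟩ := Finset.nonempty_iff_ne_empty.mpr hne
      have hw := (hhom (Fin.last p)) (MvPolynomial.mem_support_iff.mp hm)
      rw [hklast] at hw
      have hm0 : m ≠ 0 := by
        intro h0
        rw [h0] at hw
        simp at hw
      obtain ⟨j, hj⟩ := Finsupp.ne_iff.mp hm0
      have hjs : j ∈ m.support := Finsupp.mem_support_iff.mpr (by simpa using hj)
      have hjv : j ∈ V (Fin.last p) :=
        hvars (Fin.last p) ((MvPolynomial.mem_vars j).mpr ⟨m, hm, hjs⟩)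
      have : (V (Fin.last p)).card = 0 := by rw [hcard]; omega
      rw [Finset.card_eq_zero] at this
      rw [this] at hjv
      exact absurd hjv (Finset.notMem_empty j)
    have hprod0 : (∏ i, f i) = 0 := Finset.prod_eq_zero (Finset.mem_univ (Fin.last p)) hfl
    rw [hprod0]
    simp only [MvPolynomial.support_zero, Finset.card_empty, Nat.cast_zero]
    rw [hnp0]
    simp
  -- main case
  have hK1 : 1 ≤ K := by
    have h1 : p = ∑ _i : Fin p, 1 := by simp
    have h2 : ∑ _i : Fin p, 1 ≤ K := Finset.sum_le_sum (fun i _ => hki i.castSucc)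
    omega
  have hP1 : 1 ≤ P := Finset.one_le_prod' (fun i _ => hki i.castSucc)
  -- R* application
  set X := ∏ i : Fin p, (ns i.castSucc).choose (ks i.castSucc) with hX
  set G := ∏ i : Fin p, (2*(ks i.castSucc)).choose (ks i.castSucc) with hG
  have hRS := rstarMulti (Finset.univ : Finset (Fin p))
    (fun i => ns i.castSucc) (fun i => ks i.castSucc)
  have hMn : max S' (2*K) ≤ n - 1 := by
    apply max_le <;> omega
  have hB : X * (2*K).choose K ≤ (n-1).choose K * G := by
    refine hRS.trans ?_
    exact Nat.mul_le_mul_right _ (Nat.choose_le_choose K hMn)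
  have hGP : G^2 * P ≤ 4*K * ((2*K).choose K)^2 := by
    have h1 : G^2 * P = ∏ i : Fin p,
        (((2*(ks i.castSucc)).choose (ks i.castSucc))^2 * ks i.castSucc) := by
      rw [Finset.prod_mul_distrib, ← Finset.prod_pow]
    have h2 : ∀ i : Fin p, ((2*(ks i.castSucc)).choose (ks i.castSucc))^2 * ks i.castSucc
        ≤ 16^(ks i.castSucc) := by
      intro i
      refine le_trans ?_ (cb_upper (ks i.castSucc))
      exact Nat.mul_le_mul_left _ (by omega)
    calc G^2 * P ≤ ∏ i : Fin p, 16^(ks i.castSucc) := by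
          rw [h1]; exact Finset.prod_le_prod' (fun i _ => h2 i)
      _ = 16^K := Finset.prod_pow_eq_pow_sum _ _ _
      _ ≤ 4*K * ((2*K).choose K)^2 := cb_lower K hK1
  -- pass to ℝ
  have hcpos : (0:ℝ) < ((2*K).choose K : ℝ) := by
    exact_mod_cast Nat.choose_pos (by omega)
  have hPposR : (0:ℝ) < (P:ℝ) := by exact_mod_cast hP1
  have hsP : (0:ℝ) < Real.sqrt P := Real.sqrt_pos.mpr hPposR
  have hg : (G:ℝ) * Real.sqrt P ≤ 2 * Real.sqrt K * ((2*K).choose K : ℝ) := by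
    have h1 : ((G:ℝ) * Real.sqrt P)^2 ≤ (2 * Real.sqrt K * ((2*K).choose K : ℝ))^2 := by
      have e1 : ((G:ℝ) * Real.sqrt P)^2 = (G:ℝ)^2 * (P:ℝ) := by
        rw [mul_pow, Real.sq_sqrt (Nat.cast_nonneg P)]
      have e2 : (2 * Real.sqrt K * ((2*K).choose K : ℝ))^2
          = 4 * (K:ℝ) * ((2*K).choose K : ℝ)^2 := by
        rw [mul_pow, mul_pow, Real.sq_sqrt (Nat.cast_nonneg K)]
        ring
      rw [e1, e2]
      exact_mod_cast hGP
    have h2 := Real.sqrt_le_sqrt h1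
    rwa [Real.sqrt_sq (by positivity), Real.sqrt_sq (by positivity)] at h2
  have hXr : (X:ℝ) * Real.sqrt P ≤ 2 * Real.sqrt K * ((n-1).choose K : ℝ) := by
    have hBr : (X:ℝ) * ((2*K).choose K : ℝ) ≤ ((n-1).choose K : ℝ) * (G:ℝ) := by
      exact_mod_cast hB
    have h3 : (X:ℝ) * Real.sqrt P * ((2*K).choose K : ℝ)
        ≤ 2 * Real.sqrt K * ((n-1).choose K : ℝ) * ((2*K).choose K : ℝ) := by
      calc (X:ℝ) * Real.sqrt P * ((2*K).choose K : ℝ)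
          = ((X:ℝ) * ((2*K).choose K : ℝ)) * Real.sqrt P := by ring
        _ ≤ (((n-1).choose K : ℝ) * (G:ℝ)) * Real.sqrt P := by
            exact mul_le_mul_of_nonneg_right hBr (le_of_lt hsP)
        _ = ((G:ℝ) * Real.sqrt P) * ((n-1).choose K : ℝ) := by ring
        _ ≤ (2 * Real.sqrt K * ((2*K).choose K : ℝ)) * ((n-1).choose K : ℝ) := by
            exact mul_le_mul_of_nonneg_right hg (Nat.cast_nonneg _)
        _ = 2 * Real.sqrt K * ((n-1).choose K : ℝ) * ((2*K).choose K : ℝ) := by ring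
    exact le_of_mul_le_mul_right h3 hcpos
  -- identity n * C(n-1,K) = C(n,k) * k
  have hchoose : (n:ℝ) * ((n-1).choose K : ℝ) = (n.choose k : ℝ) * (k:ℝ) := by
    have h := Nat.add_one_mul_choose_eq (n-1) K
    have hn1 : n - 1 + 1 = n := by omega
    rw [hn1, hkK] at h
    exact_mod_cast h
  -- rewrite the goal
  have hcastP : (∏ i : Fin p, (ks i.castSucc : ℝ)) = (P:ℝ) := by
    rw [hP]; push_cast; rfl
  rw [hcastP]
  have hk0 : (0:ℝ) < (k:ℝ) := by exact_mod_cast hkpos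
  have hn0 : (0:ℝ) < (n:ℝ) := by positivity
  have e3 : (k:ℝ)^((3:ℝ)/2) = (k:ℝ) * Real.sqrt k := by
    rw [show (3:ℝ)/2 = 1 + 1/2 by norm_num, Real.rpow_add hk0, Real.rpow_one,
      ← Real.sqrt_eq_rpow]
  have e4 : (P:ℝ)^(-(1:ℝ)/2) = (Real.sqrt P)⁻¹ := by
    rw [show -(1:ℝ)/2 = -(1/2) by norm_num, Real.rpow_neg (Nat.cast_nonneg P),
      ← Real.sqrt_eq_rpow]
  rw [e3, e4]
  have heqT : 3 * ((k:ℝ) * Real.sqrt k) * (Real.sqrt P)⁻¹ * (n.choose k : ℝ) * (np:ℝ) / (n:ℝ)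
      = 3 * Real.sqrt k * (Real.sqrt P)⁻¹ * ((n-1).choose K : ℝ) * (np:ℝ) := by
    rw [div_eq_iff (ne_of_gt hn0)]
    linear_combination (-(3 * Real.sqrt (k:ℝ) * (Real.sqrt (P:ℝ))⁻¹ * ((np:ℕ):ℝ))) * hchoose
  rw [heqT]
  -- final chain
  have hcard2 : ((∏ i, f i).support.card : ℝ) ≤ (X:ℝ) * (np:ℝ) := by
    exact_mod_cast hA
  have hXle : (X:ℝ) ≤ 2 * Real.sqrt K * ((n-1).choose K : ℝ) * (Real.sqrt P)⁻¹ := by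
    have h := (le_div_iff₀ hsP).mpr hXr
    rwa [div_eq_mul_inv] at h
  have hKk : Real.sqrt K ≤ Real.sqrt k := by
    apply Real.sqrt_le_sqrt
    exact_mod_cast (by omega : K ≤ k)
  calc ((∏ i, f i).support.card : ℝ) ≤ (X:ℝ) * (np:ℝ) := hcard2
    _ ≤ (2 * Real.sqrt K * ((n-1).choose K : ℝ) * (Real.sqrt P)⁻¹) * (np:ℝ) := by
        exact mul_le_mul_of_nonneg_right hXle (Nat.cast_nonneg np)
    _ ≤ (3 * Real.sqrt k * ((n-1).choose K : ℝ) * (Real.sqrt P)⁻¹) * (np:ℝ) := by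
        have h1 : 2 * Real.sqrt K ≤ 3 * Real.sqrt k := by
          nlinarith [Real.sqrt_nonneg (K:ℝ), Real.sqrt_nonneg (k:ℝ)]
        have h2 : (0:ℝ) ≤ ((n-1).choose K : ℝ) * (Real.sqrt P)⁻¹ := by positivity
        nlinarith [Nat.cast_nonneg (α := ℝ) np, mul_le_mul_of_nonneg_right h1 h2]
    _ = 3 * Real.sqrt k * (Real.sqrt P)⁻¹ * ((n-1).choose K : ℝ) * (np:ℝ) := by ring
end

section
/- The number of partitions of a natural number k (the partition function p(k)) satisfies p(k) ≤ 2^{C·√k} for some universal constant C > 0; in particular p(k) ≤ 2^{4·√k} for all k ≥ 1. -/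
open Real Finset

private lemma parts_le {n : ℕ} (p : Nat.Partition n) {a : ℕ} (ha : a ∈ p.parts) : a ≤ n :=
  le_trans (Multiset.single_le_sum (fun x _ => Nat.zero_le x) a ha) (le_of_eq p.parts_sum)

private lemma partition_count_sum (n : ℕ) (p : Nat.Partition n) :
    ∑ k ∈ Finset.Icc 1 n, p.parts.count k * k = n := by
  classical
  have hsub : p.parts.toFinset ⊆ Finset.Icc 1 n := by
    intro a ha
    rw [Multiset.mem_toFinset] at ha
    exact Finset.mem_Icc.2 ⟨p.parts_pos ha, parts_le p ha⟩
  have h := Finset.sum_multiset_count_of_subset p.parts (Finset.Icc 1 n) hsub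
  rw [p.parts_sum] at h
  simpa [smul_eq_mul] using h.symm

private lemma partition_fin_sum (n : ℕ) (p : Nat.Partition n) :
    ∑ i : Fin n, ((i : ℕ) + 1) * p.parts.count ((i : ℕ) + 1) = n := by
  classical
  have h := partition_count_sum n p
  rw [show Finset.Icc 1 n = Finset.Ico 1 (n + 1) by rw [Finset.Ico_add_one_right_eq_Icc],
    Finset.sum_Ico_eq_sum_range] at h
  rw [Fin.sum_univ_eq_sum_range (fun i => (i + 1) * p.parts.count (i + 1))]
  simpa [Nat.add_comm, Nat.mul_comm] using h

private lemma card_mul_le (n : ℕ) (q : ℝ) (hq0 : 0 ≤ q) (hq1 : q < 1) :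
    (Fintype.card (Nat.Partition n) : ℝ) * q ^ n ≤
      ∏ i : Fin n, (1 - q ^ ((i : ℕ) + 1))⁻¹ := by
  classical
  set Φ : Nat.Partition n → (Fin n → ℕ) := fun p i => p.parts.count ((i : ℕ) + 1) with hΦ
  have hΦinj : Function.Injective Φ := by
    intro p p' h
    ext a
    rcases Nat.eq_zero_or_pos a with rfl | hapos
    · rw [Multiset.count_eq_zero.2 (fun hm => lt_irrefl 0 (p.parts_pos hm)),
        Multiset.count_eq_zero.2 (fun hm => lt_irrefl 0 (p'.parts_pos hm))]
    · by_cases han : a ≤ n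
      · have hlt : a - 1 < n := by omega
        have := congrFun h ⟨a - 1, hlt⟩
        simpa [hΦ, Nat.sub_add_cancel hapos] using this
      · rw [Multiset.count_eq_zero.2 (fun hm => han (parts_le p hm)),
          Multiset.count_eq_zero.2 (fun hm => han (parts_le p' hm))]
  have hmem : ∀ p : Nat.Partition n,
      Φ p ∈ Fintype.piFinset (fun _ : Fin n => Finset.range (n + 1)) := by
    intro p
    rw [Fintype.mem_piFinset]
    intro i
    rw [Finset.mem_range]
    have h1 : ((i : ℕ) + 1) * p.parts.count ((i : ℕ) + 1) ≤ n := by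
      have hs := partition_fin_sum n p
      have := Finset.single_le_sum
        (f := fun j : Fin n => ((j : ℕ) + 1) * p.parts.count ((j : ℕ) + 1))
        (fun j _ => Nat.zero_le _) (Finset.mem_univ i)
      rw [hs] at this
      exact this
    have h2 : p.parts.count ((i : ℕ) + 1) ≤ ((i : ℕ) + 1) * p.parts.count ((i : ℕ) + 1) :=
      Nat.le_mul_of_pos_left _ (Nat.succ_pos _)
    show p.parts.count ((i : ℕ) + 1) < n + 1
    omega
  have step1 : (Fintype.card (Nat.Partition n) : ℝ) * q ^ n =
      ∑ p : Nat.Partition n, ∏ i : Fin n, q ^ (((i : ℕ) + 1) * Φ p i) := by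
    have hp : ∀ p : Nat.Partition n, ∏ i : Fin n, q ^ (((i : ℕ) + 1) * Φ p i) = q ^ n := by
      intro p
      rw [Finset.prod_pow_eq_pow_sum]
      rw [partition_fin_sum n p]
    simp [hp, Finset.card_univ, mul_comm]
  have step2 : ∑ p : Nat.Partition n, ∏ i : Fin n, q ^ (((i : ℕ) + 1) * Φ p i) =
      ∑ x ∈ Finset.univ.image Φ, ∏ i : Fin n, q ^ (((i : ℕ) + 1) * x i) := by
    rw [Finset.sum_image (fun a _ b _ hab => hΦinj hab)]
  have step3 : ∑ x ∈ Finset.univ.image Φ, ∏ i : Fin n, q ^ (((i : ℕ) + 1) * x i) ≤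
      ∑ x ∈ Fintype.piFinset (fun _ : Fin n => Finset.range (n + 1)),
        ∏ i : Fin n, q ^ (((i : ℕ) + 1) * x i) := by
    apply Finset.sum_le_sum_of_subset_of_nonneg
    · intro x hx
      rcases Finset.mem_image.1 hx with ⟨p, _, rfl⟩
      exact hmem p
    · intro x _ _
      exact Finset.prod_nonneg (fun i _ => pow_nonneg hq0 _)
  have step4 : ∑ x ∈ Fintype.piFinset (fun _ : Fin n => Finset.range (n + 1)),
        ∏ i : Fin n, q ^ (((i : ℕ) + 1) * x i) =
      ∏ i : Fin n, ∑ m ∈ Finset.range (n + 1), q ^ (((i : ℕ) + 1) * m) :=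
    (Finset.prod_univ_sum (κ := fun _ : Fin n => ℕ) (fun _ => Finset.range (n + 1))
      (fun i m => q ^ (((i : ℕ) + 1) * m))).symm
  have step5 : ∏ i : Fin n, ∑ m ∈ Finset.range (n + 1), q ^ (((i : ℕ) + 1) * m) ≤
      ∏ i : Fin n, (1 - q ^ ((i : ℕ) + 1))⁻¹ := by
    apply Finset.prod_le_prod
    · intro i _
      exact Finset.sum_nonneg (fun m _ => pow_nonneg hq0 _)
    · intro i _
      have hr0 : 0 ≤ q ^ ((i : ℕ) + 1) := pow_nonneg hq0 _
      have hr1 : q ^ ((i : ℕ) + 1) < 1 := pow_lt_one₀ hq0 hq1 (Nat.succ_ne_zero _)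
      calc ∑ m ∈ Finset.range (n + 1), q ^ (((i : ℕ) + 1) * m)
          = ∑ m ∈ Finset.range (n + 1), (q ^ ((i : ℕ) + 1)) ^ m := by
            refine Finset.sum_congr rfl (fun m _ => ?_); rw [← pow_mul]
        _ ≤ ∑' m : ℕ, (q ^ ((i : ℕ) + 1)) ^ m :=
            Summable.sum_le_tsum _ (fun m _ => pow_nonneg hr0 _)
              (summable_geometric_of_lt_one hr0 hr1)
        _ = (1 - q ^ ((i : ℕ) + 1))⁻¹ := tsum_geometric_of_lt_one hr0 hr1
  rw [step1, step2]
  exact le_trans step3 (le_of_eq step4 |>.trans step5)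

private lemma one_sub_exp_lower {u : ℝ} (hu : 0 < u) :
    u * Real.exp (-u) ≤ 1 - Real.exp (-u) := by
  have h := Real.add_one_le_exp u
  have he : (0 : ℝ) < Real.exp (-u) := Real.exp_pos _
  have hmul : Real.exp u * Real.exp (-u) = 1 := by rw [← Real.exp_add]; simp
  nlinarith [mul_le_mul_of_nonneg_right h he.le]

private lemma sum_neg_log_le (n : ℕ) (t : ℝ) (ht : 0 < t) :
    ∑ i : Fin n, -Real.log (1 - Real.exp (-t) ^ ((i : ℕ) + 1)) ≤ (7 / 4) / t := by
  classical
  set q : ℝ := Real.exp (-t) with hq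
  have hq0 : (0 : ℝ) < q := Real.exp_pos _
  have hq1 : q < 1 := Real.exp_lt_one_iff.2 (neg_lt_zero.2 ht)
  have hqk : ∀ k : ℕ, q ^ k = Real.exp (-(t * k)) := by
    intro k
    rw [hq, ← Real.exp_nat_mul]
    congr 1
    ring
  have hps : ∀ i : Fin n,
      HasSum (fun j : ℕ => (q ^ ((i : ℕ) + 1)) ^ (j + 1) / (j + 1))
        (-Real.log (1 - q ^ ((i : ℕ) + 1))) := by
    intro i
    apply hasSum_pow_div_log_of_abs_lt_one
    rw [abs_of_nonneg (pow_nonneg hq0.le _)]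
    exact pow_lt_one₀ hq0.le hq1 (Nat.succ_ne_zero _)
  have hswap : ∑ i : Fin n, -Real.log (1 - q ^ ((i : ℕ) + 1)) =
      ∑' j : ℕ, ∑ i : Fin n, (q ^ ((i : ℕ) + 1)) ^ (j + 1) / (j + 1) := by
    rw [Summable.tsum_finsetSum (fun i _ => (hps i).summable)]
    exact Finset.sum_congr rfl (fun i _ => ((hps i).tsum_eq).symm)
  rw [hswap]
  have hbound : ∀ j : ℕ, ∑ i : Fin n, (q ^ ((i : ℕ) + 1)) ^ (j + 1) / (j + 1) ≤
      (1 / t) * (1 / ((j : ℝ) + 1) ^ 2) := by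
    intro j
    have hj1 : (0 : ℝ) < (j : ℝ) + 1 := by positivity
    set r : ℝ := q ^ (j + 1) with hr
    have hr0 : (0 : ℝ) < r := pow_pos hq0 _
    have hr1 : r < 1 := pow_lt_one₀ hq0.le hq1 (Nat.succ_ne_zero _)
    have h1r : (0 : ℝ) < 1 - r := by linarith
    have hcomm : ∀ i : Fin n, (q ^ ((i : ℕ) + 1)) ^ (j + 1) = r ^ ((i : ℕ) + 1) := by
      intro i; rw [hr, ← pow_mul, ← pow_mul, Nat.mul_comm]
    have hsum : ∑ i : Fin n, r ^ ((i : ℕ) + 1) ≤ r / (1 - r) := by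
      calc ∑ i : Fin n, r ^ ((i : ℕ) + 1) = r * ∑ i ∈ Finset.range n, r ^ i := by
            rw [Finset.mul_sum, Fin.sum_univ_eq_sum_range (fun i => r ^ (i + 1))]
            exact Finset.sum_congr rfl (fun i _ => by ring)
        _ ≤ r * (1 - r)⁻¹ := by
            refine mul_le_mul_of_nonneg_left ?_ hr0.le
            calc ∑ i ∈ Finset.range n, r ^ i ≤ ∑' i : ℕ, r ^ i :=
                  Summable.sum_le_tsum _ (fun i _ => pow_nonneg hr0.le _)
                    (summable_geometric_of_lt_one hr0.le hr1)
              _ = (1 - r)⁻¹ := tsum_geometric_of_lt_one hr0.le hr1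
        _ = r / (1 - r) := (div_eq_mul_inv r _).symm
    have hgeom : r / (1 - r) ≤ 1 / (t * ((j : ℝ) + 1)) := by
      have hu : (0 : ℝ) < t * ((j : ℝ) + 1) := by positivity
      have hrexp : r = Real.exp (-(t * ((j : ℝ) + 1))) := by
        rw [hr, hqk (j + 1)]
        push_cast
        ring_nf
      have hlow : t * ((j : ℝ) + 1) * r ≤ 1 - r := by
        rw [hrexp]
        exact one_sub_exp_lower hu
      rw [div_le_div_iff₀ h1r hu]
      nlinarith [hr0.le]
    calc ∑ i : Fin n, (q ^ ((i : ℕ) + 1)) ^ (j + 1) / (j + 1)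
        = (∑ i : Fin n, r ^ ((i : ℕ) + 1)) / ((j : ℝ) + 1) := by
          rw [Finset.sum_div]
          exact Finset.sum_congr rfl (fun i _ => by rw [hcomm i])
      _ ≤ (r / (1 - r)) / ((j : ℝ) + 1) := by gcongr
      _ ≤ (1 / (t * ((j : ℝ) + 1))) / ((j : ℝ) + 1) := by gcongr
      _ = (1 / t) * (1 / ((j : ℝ) + 1) ^ 2) := by
          field_simp
  have hbasel : HasSum (fun j : ℕ => (1 : ℝ) / ((j : ℝ) + 1) ^ 2) (π ^ 2 / 6) := by
    have h0 : HasSum (fun n : ℕ => (1 : ℝ) / (n : ℝ) ^ 2) (π ^ 2 / 6) := hasSum_zeta_two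
    have h1 := (hasSum_nat_add_iff (f := fun n : ℕ => (1 : ℝ) / (n : ℝ) ^ 2)
      (g := π ^ 2 / 6 - ∑ i ∈ Finset.range 1, (1 : ℝ) / (i : ℝ) ^ 2) 1).2
    simp only [Finset.range_one, Finset.sum_singleton, Nat.cast_zero] at h1
    have h2 := h1 (by simpa using h0)
    have : (fun n : ℕ => (1 : ℝ) / ((n + 1 : ℕ) : ℝ) ^ 2) =
        fun j : ℕ => (1 : ℝ) / ((j : ℝ) + 1) ^ 2 := by
      funext j; push_cast; ring
    rw [this] at h2
    simpa using h2
  have hg : HasSum (fun j : ℕ => (1 / t) * ((1 : ℝ) / ((j : ℝ) + 1) ^ 2))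
      ((1 / t) * (π ^ 2 / 6)) := hbasel.mul_left _
  have hsumL : Summable (fun j : ℕ =>
      ∑ i : Fin n, (q ^ ((i : ℕ) + 1)) ^ (j + 1) / (j + 1)) :=
    summable_sum (fun i _ => (hps i).summable)
  calc ∑' j : ℕ, ∑ i : Fin n, (q ^ ((i : ℕ) + 1)) ^ (j + 1) / (j + 1)
      ≤ ∑' j : ℕ, (1 / t) * ((1 : ℝ) / ((j : ℝ) + 1) ^ 2) :=
        Summable.tsum_le_tsum hbound hsumL hg.summable
    _ = (1 / t) * (π ^ 2 / 6) := hg.tsum_eq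
    _ ≤ (1 / t) * (7 / 4) := by
        refine mul_le_mul_of_nonneg_left ?_ (by positivity)
        nlinarith [Real.pi_lt_d2, Real.pi_gt_three]
    _ = (7 / 4) / t := by ring

private lemma prod_inv_le (n : ℕ) (t : ℝ) (ht : 0 < t) :
    ∏ i : Fin n, (1 - Real.exp (-t) ^ ((i : ℕ) + 1))⁻¹ ≤ Real.exp ((7 / 4) / t) := by
  have hq0 : (0 : ℝ) < Real.exp (-t) := Real.exp_pos _
  have hq1 : Real.exp (-t) < 1 := Real.exp_lt_one_iff.2 (neg_lt_zero.2 ht)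
  have hpos : ∀ i : Fin n, (0 : ℝ) < 1 - Real.exp (-t) ^ ((i : ℕ) + 1) := by
    intro i
    have : Real.exp (-t) ^ ((i : ℕ) + 1) < 1 := pow_lt_one₀ hq0.le hq1 (Nat.succ_ne_zero _)
    linarith
  have heq : ∏ i : Fin n, (1 - Real.exp (-t) ^ ((i : ℕ) + 1))⁻¹ =
      Real.exp (∑ i : Fin n, -Real.log (1 - Real.exp (-t) ^ ((i : ℕ) + 1))) := by
    rw [Real.exp_sum]
    refine Finset.prod_congr rfl (fun i _ => ?_)
    rw [Real.exp_neg (Real.log (1 - Real.exp (-t) ^ ((i : ℕ) + 1))), Real.exp_log (hpos i)]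
  rw [heq]
  exact Real.exp_le_exp.2 (sum_neg_log_le n t ht)

private lemma main_bound (k : ℕ) (hk : 1 ≤ k) :
    (Fintype.card (Nat.Partition k) : ℝ) ≤ 2 ^ (4 * Real.sqrt k) := by
  have hk0 : (0 : ℝ) < (k : ℝ) := by exact_mod_cast hk
  have hsk : 0 < Real.sqrt k := Real.sqrt_pos.2 hk0
  have hs74 : 0 < Real.sqrt (7 / 4 : ℝ) := Real.sqrt_pos.2 (by norm_num)
  set t : ℝ := Real.sqrt (7 / 4) / Real.sqrt k with ht_def
  have ht : 0 < t := div_pos hs74 hsk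
  have hq0 : (0 : ℝ) < Real.exp (-t) := Real.exp_pos _
  have hq1 : Real.exp (-t) < 1 := Real.exp_lt_one_iff.2 (neg_lt_zero.2 ht)
  have h1 := card_mul_le k (Real.exp (-t)) hq0.le hq1
  have h2 := prod_inv_le k t ht
  have hqk : Real.exp (-t) ^ k = Real.exp (-(t * k)) := by
    rw [← Real.exp_nat_mul]
    congr 1
    ring
  have hcard : (Fintype.card (Nat.Partition k) : ℝ) ≤ Real.exp (t * k + (7 / 4) / t) := by
    have hpow : (0 : ℝ) < Real.exp (-t) ^ k := pow_pos hq0 _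
    have := le_trans h1 h2
    rw [← le_div_iff₀ hpow] at this
    calc (Fintype.card (Nat.Partition k) : ℝ)
        ≤ Real.exp ((7 / 4) / t) / Real.exp (-t) ^ k := this
      _ = Real.exp (t * k + (7 / 4) / t) := by
          rw [hqk, ← Real.exp_sub]
          congr 1
          ring
  have htk : t * k = Real.sqrt (7 / 4) * Real.sqrt k := by
    rw [ht_def]
    rw [div_mul_eq_mul_div, mul_div_assoc, Real.div_sqrt]
  have h74t : (7 / 4) / t = Real.sqrt (7 / 4) * Real.sqrt k := by
    rw [ht_def, div_div_eq_mul_div, mul_comm (7 / 4 : ℝ), mul_div_assoc,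
      Real.div_sqrt, mul_comm]
  have hexp : t * k + (7 / 4) / t = 2 * Real.sqrt (7 / 4) * Real.sqrt k := by
    rw [htk, h74t]; ring
  have hlog : Real.sqrt (7 / 4 : ℝ) ≤ 2 * Real.log 2 := by
    have hl2 : (0.6931471803 : ℝ) < Real.log 2 := Real.log_two_gt_d9
    have h : (7 / 4 : ℝ) ≤ (2 * Real.log 2) ^ 2 := by nlinarith
    calc Real.sqrt (7 / 4 : ℝ) ≤ Real.sqrt ((2 * Real.log 2) ^ 2) := Real.sqrt_le_sqrt h
      _ = 2 * Real.log 2 := Real.sqrt_sq (by positivity)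
  have hfinal : Real.exp (t * k + (7 / 4) / t) ≤ 2 ^ (4 * Real.sqrt k) := by
    rw [Real.rpow_def_of_pos (by norm_num : (0 : ℝ) < 2)]
    apply Real.exp_le_exp.2
    rw [hexp]
    nlinarith [hsk.le, hlog, hs74.le]
  exact hcard.trans hfinal

private lemma card_partition_zero_le : (Fintype.card (Nat.Partition 0) : ℝ) ≤ 1 := by
  have h : Fintype.card (Nat.Partition 0) ≤ 1 := by
    apply Fintype.card_le_one_iff.2
    intro a b
    have hz : ∀ p : Nat.Partition 0, p.parts = 0 := by
      intro p
      rw [Multiset.eq_zero_iff_forall_notMem]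
      intro x hx
      have h0 : x = 0 := (Multiset.sum_eq_zero_iff.1 p.parts_sum) x hx
      exact absurd (p.parts_pos hx) (by omega)
    exact Nat.Partition.ext ((hz a).trans (hz b).symm)
  exact_mod_cast h

/-- Hardy–Ramanujan-type bound: the partition function satisfies
`p(k) ≤ 2^(C·√k)` for some universal constant `C > 0`; in particular
`p(k) ≤ 2^(4·√k)` for all `k ≥ 1`. -/
theorem stmt19 :
    (∃ C : ℝ, 0 < C ∧ ∀ k : ℕ,
        (Fintype.card (Nat.Partition k) : ℝ) ≤ 2 ^ (C * Real.sqrt k)) ∧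
    (∀ k : ℕ, 1 ≤ k →
        (Fintype.card (Nat.Partition k) : ℝ) ≤ 2 ^ (4 * Real.sqrt k)) := by
  have hall : ∀ k : ℕ, (Fintype.card (Nat.Partition k) : ℝ) ≤ 2 ^ (4 * Real.sqrt k) := by
    intro k
    rcases Nat.eq_zero_or_pos k with rfl | hk
    · simpa [Real.sqrt_zero, Real.rpow_zero] using card_partition_zero_le
    · exact main_bound k hk
  exact ⟨⟨4, by norm_num, hall⟩, fun k _ => hall k⟩
end
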